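/- arXiv:cs/0501039 — 3 statements merged into one kernel-verified Lean document; each statement's English description precedes it below -/
import Mathlib

section
/- If a paraproof structure satisfies the weak parsing criterion (some parsing reduction sequence reaches the trivial single-class structure on its conclusions), then it is sequentializable. -/
/-! Multiplicative linear logic formulas -/

inductive MLLForm : Type
  | atomP : ℕ → MLLForm
  | atomN : ℕ → MLLForm
  | tens : MLLForm → MLLForm → MLLForm
  | parr : MLLForm → MLLForm → MLLForm
  deriving DecidableEq, Inhabited

namespace MLLForm

def dual : MLLForm → MLLForm
  | atomP n => atomN n
  | atomN n => atomP n
  | tens a b => parr a.dual b.dual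
  | parr a b => tens a.dual b.dual

/-- Subformula at an occurrence (word over {left=false, right=true}). -/
def subAt : MLLForm → List Bool → Option MLLForm
  | A, [] => some A
  | tens a _, false :: u => a.subAt u
  | tens _ b, true :: u => b.subAt u
  | parr a _, false :: u => a.subAt u
  | parr _ b, true :: u => b.subAt u
  | _, _ => none

end MLLForm

/-- A (raw) paraproof structure: a finite multiset of conclusions, given by names,
with for each name a formula and a set of occurrences (the partial formula tree),
together with a partition of the leaves (generalized axioms / daimons). -/
structure PPS where
  names : Finset ℕ
  form : ℕ → MLLForm
  occs : ℕ → Finset (List Bool)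
  part : Finset (Finset (ℕ × List Bool))

namespace PPS

def leaves (S : PPS) : Finset (ℕ × List Bool) :=
  S.names.biUnion fun n => (S.occs n).image fun u => (n, u)

/-- Well-formedness: occurrences are defined and pairwise non-prefix; the partition
really is a partition of the set of leaves. -/
def WF (S : PPS) : Prop :=
  (∀ n ∈ S.names, ∀ u ∈ S.occs n, ((S.form n).subAt u).isSome) ∧
  (∀ n ∈ S.names, ∀ u ∈ S.occs n, ∀ v ∈ S.occs n, u ≠ v → ¬ u <+: v) ∧
  (∀ c ∈ S.part, c.Nonempty) ∧
  (∀ c ∈ S.part, ∀ d ∈ S.part, c ≠ d → Disjoint c d) ∧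
  S.part.biUnion id = S.leaves

/-- `(n, u)` is a node of the forest underlying `S`. -/
def isNode (S : PPS) (n : ℕ) (u : List Bool) : Prop :=
  n ∈ S.names ∧ ∃ v ∈ S.occs n, u <+: v

/-- `(n, u)` is an internal par node of `S`. -/
def isPar (S : PPS) (n : ℕ) (u : List Bool) : Prop :=
  n ∈ S.names ∧ (∃ v ∈ S.occs n, u <+: v ∧ u ≠ v) ∧
    ∃ a b, (S.form n).subAt u = some (.parr a b)

end PPS

/-- Relabelling of a leaf used when two conclusions get merged under a connective. -/
def relab1 (m0 n : ℕ) (b : Bool) : ℕ × List Bool → ℕ × List Bool :=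
  fun x => if x.1 = m0 then (n, b :: x.2) else x

/-- Sequentializable paraproof structures (paraproof nets) for cut-free MLL:
generalized axiom, par rule, tensor rule. -/
inductive SeqNet : PPS → Prop
  | ax (S : PPS)
      (h1 : ∀ n ∈ S.names, S.occs n = {([] : List Bool)})
      (h2 : S.part = {S.leaves}) : SeqNet S
  | parr (S S' : PPS) (nB nC n : ℕ)
      (hSeq : SeqNet S)
      (hnB : nB ∈ S.names) (hnC : nC ∈ S.names) (hne : nB ≠ nC)
      (hfresh : n ∉ S.names \ {nB, nC})
      (hnames : S'.names = insert n (S.names \ {nB, nC}))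
      (hform : S'.form n = .parr (S.form nB) (S.form nC))
      (hformo : ∀ m ∈ S.names \ {nB, nC}, S'.form m = S.form m)
      (hoccs : S'.occs n =
        (S.occs nB).image (fun u => false :: u) ∪ (S.occs nC).image (fun u => true :: u))
      (hoccso : ∀ m ∈ S.names \ {nB, nC}, S'.occs m = S.occs m)
      (hpart : S'.part = S.part.image
        (Finset.image (fun x => relab1 nB n false (relab1 nC n true x)))) :
      SeqNet S'
  | tens (S1 S2 S' : PPS) (nB nC n : ℕ)
      (hSeq1 : SeqNet S1) (hSeq2 : SeqNet S2)
      (hdisj : Disjoint S1.names S2.names)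
      (hnB : nB ∈ S1.names) (hnC : nC ∈ S2.names)
      (hfresh : n ∉ (S1.names ∪ S2.names) \ {nB, nC})
      (hnames : S'.names = insert n ((S1.names.erase nB) ∪ (S2.names.erase nC)))
      (hform : S'.form n = .tens (S1.form nB) (S2.form nC))
      (hform1 : ∀ m ∈ S1.names.erase nB, S'.form m = S1.form m)
      (hform2 : ∀ m ∈ S2.names.erase nC, S'.form m = S2.form m)
      (hoccs : S'.occs n =
        (S1.occs nB).image (fun u => false :: u) ∪ (S2.occs nC).image (fun u => true :: u))
      (hoccs1 : ∀ m ∈ S1.names.erase nB, S'.occs m = S1.occs m)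
      (hoccs2 : ∀ m ∈ S2.names.erase nC, S'.occs m = S2.occs m)
      (hpart : S'.part =
        S1.part.image (Finset.image (relab1 nB n false)) ∪
        S2.part.image (Finset.image (relab1 nC n true))) :
      SeqNet S'

/-- Vertices of correction graphs: nodes of the forest, or classes of the partition. -/
abbrev PNode := (ℕ × List Bool) ⊕ Finset (ℕ × List Bool)

/-- Edges of the correction graph induced by a switching `sw` (value `true` = L,
which cuts the edge to the right subformula, i.e. to child `true`). -/
def corrRel (S : PPS) (sw : ℕ × List Bool → Bool) : PNode → PNode → Prop :=
  fun x y =>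
    (∃ n u b, x = Sum.inl (n, u) ∧ y = Sum.inl (n, u ++ [b]) ∧
      S.isNode n (u ++ [b]) ∧ ¬ (S.isPar n u ∧ sw (n, u) = b)) ∨
    (∃ n u c, x = Sum.inl (n, u) ∧ y = Sum.inr c ∧ c ∈ S.part ∧ (n, u) ∈ c)

def corrGraph (S : PPS) (sw : ℕ × List Bool → Bool) : SimpleGraph PNode :=
  SimpleGraph.fromRel (corrRel S sw)

def PPS.nodeSet (S : PPS) : Set PNode :=
  {x | (∃ n u, x = Sum.inl (n, u) ∧ S.isNode n u) ∨ ∃ c ∈ S.part, x = Sum.inr c}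

/-- The Danos-Regnier criterion: every correction graph is a tree
(connected and acyclic). -/
def DR (S : PPS) : Prop :=
  ∀ sw, ((corrGraph S sw).induce S.nodeSet).Connected ∧ (corrGraph S sw).IsAcyclic

/-- The Acyclicity criterion (MIX): every correction graph is acyclic. -/
def AC (S : PPS) : Prop := ∀ sw, (corrGraph S sw).IsAcyclic

/-- The parsing rewriting system on paraproof structures. -/
inductive Parse : PPS → PPS → Prop
  | parr (S S' : PPS) (n : ℕ) (u : List Bool) (a b : MLLForm)
      (c : Finset (ℕ × List Bool))
      (hn : n ∈ S.names)
      (hf : (S.form n).subAt u = some (.parr a b))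
      (h0 : u ++ [false] ∈ S.occs n) (h1 : u ++ [true] ∈ S.occs n)
      (hc : c ∈ S.part) (hc0 : (n, u ++ [false]) ∈ c) (hc1 : (n, u ++ [true]) ∈ c)
      (hnames : S'.names = S.names)
      (hforms : ∀ m ∈ S.names, S'.form m = S.form m)
      (hoccs : S'.occs n =
        insert u (((S.occs n).erase (u ++ [false])).erase (u ++ [true])))
      (hoccso : ∀ m ∈ S.names, m ≠ n → S'.occs m = S.occs m)
      (hpart : S'.part =
        insert (insert (n, u) ((c.erase (n, u ++ [false])).erase (n, u ++ [true])))
          (S.part.erase c)) :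
      Parse S S'
  | tens (S S' : PPS) (n : ℕ) (u : List Bool) (a b : MLLForm)
      (c1 c2 : Finset (ℕ × List Bool))
      (hn : n ∈ S.names)
      (hf : (S.form n).subAt u = some (.tens a b))
      (h0 : u ++ [false] ∈ S.occs n) (h1 : u ++ [true] ∈ S.occs n)
      (hc1 : c1 ∈ S.part) (hc2 : c2 ∈ S.part) (hne : c1 ≠ c2)
      (hm0 : (n, u ++ [false]) ∈ c1) (hm1 : (n, u ++ [true]) ∈ c2)
      (hnames : S'.names = S.names)
      (hforms : ∀ m ∈ S.names, S'.form m = S.form m)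
      (hoccs : S'.occs n =
        insert u (((S.occs n).erase (u ++ [false])).erase (u ++ [true])))
      (hoccso : ∀ m ∈ S.names, m ≠ n → S'.occs m = S.occs m)
      (hpart : S'.part =
        insert (insert (n, u) (((c1 ∪ c2).erase (n, u ++ [false])).erase (n, u ++ [true])))
          ((S.part.erase c1).erase c2)) :
      Parse S S'

/-- The completely parsed (trivial) structure: undecomposed conclusions and a
single class consisting of all of them. -/
def Parsed (S : PPS) : Prop :=
  (∀ n ∈ S.names, S.occs n = {([] : List Bool)}) ∧ S.part = {S.leaves}

def WeakParse (S : PPS) : Prop :=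
  ∃ S', Relation.ReflTransGen Parse S S' ∧ Parsed S'

def StrongParse (S : PPS) : Prop :=
  ∀ S', Relation.ReflTransGen Parse S S' →
    ∃ S'', Relation.ReflTransGen Parse S' S'' ∧ Parsed S''


/-!
A parsing step can be undone inside any sequentialization of its result, so the whole parsing
sequence can be run backwards from the trivial structure, which is a generalized axiom.

To undo a step `S → T`, induct on a sequentialization of `T`. If `T` is a generalized axiom, the
step split one of its conclusions, and `S` is a generalized axiom followed by a par rule, or two
followed by a tensor rule. Otherwise the class created by the step comes from a premise of the
last rule, so the step pulls back along the relabelling of leaves done by that rule. The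
expansion of the premise then commutes with the rule.

The inversion needs sequentializations that carry well-formedness and name new conclusions
freshly, with rules read up to agreement on the conclusions.
-/

open Finset

abbrev Leaf := ℕ × List Bool

theorem List.concat_prefix_of_prefix_of_ne {α : Type*} {u w : List α} (h : u <+: w)
    (hne : u ≠ w) : ∃ b, u ++ [b] <+: w := by
  obtain ⟨t, rfl⟩ := h
  cases t with
  | nil => simp at hne
  | cons b t => exact ⟨b, t, by simp⟩

namespace MLLForm

theorem subAt_nil (A : MLLForm) : A.subAt [] = some A := by
  cases A <;> rfl

theorem subAt_append (u v : List Bool) (A : MLLForm) :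
    A.subAt (u ++ v) = (A.subAt u).bind (·.subAt v) := by
  induction u generalizing A with
  | nil => cases A <;> rfl
  | cons b u ih => cases A <;> cases b <;> simp [subAt, ih]

end MLLForm

namespace Finset

theorem injOn_image_of_subset {α β : Type*} [DecidableEq β] {f : α → β} {L : Finset α}
    {P : Finset (Finset α)} (hf : Set.InjOn f L) (hP : ∀ c ∈ P, c ⊆ L) :
    Set.InjOn (image f) P := fun c hc d hd h =>
  (image_eq_image_iff_of_injOn hf (hP c hc) (hP d hd)).1 h

theorem image_image_of_leftInvOn {α β : Type*} [DecidableEq α] [DecidableEq β]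
    {f : β → α} {g : α → β} {s : Finset α} (h : ∀ y ∈ s, f (g y) = y) :
    (s.image g).image f = s := by
  rw [image_image]
  exact (image_congr h).trans image_id'

variable {α : Type*} [DecidableEq α] {s : Finset α} {a b c x : α}

theorem insert_insert_erase_insert_erase_erase (ha : a ∈ s) (hb : b ∈ s) (hc : c ∉ s) :
    insert a (insert b ((insert c ((s.erase a).erase b)).erase c)) = s := by
  ext y
  simp only [mem_insert, mem_erase]
  constructor
  · rintro (rfl | rfl | ⟨hyc, rfl | ⟨-, -, hy⟩⟩)
    exacts [ha, hb, absurd rfl hyc, hy]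
  · intro hy
    by_cases e : y = a
    · exact .inl e
    by_cases e' : y = b
    · exact .inr (.inl e')
    exact .inr (.inr ⟨fun e'' => hc (e'' ▸ hy), .inr ⟨e', e, hy⟩⟩)

theorem insert_erase_erase_insert_insert_erase (hc : c ∈ s) (ha : a ∉ s) (hb : b ∉ s) :
    insert c (((insert a (insert b (s.erase c))).erase a).erase b) = s := by
  ext y
  simp only [mem_insert, mem_erase]
  constructor
  · rintro (rfl | ⟨hyb, hya, rfl | rfl | ⟨-, hy⟩⟩)
    exacts [hc, absurd rfl hya, absurd rfl hyb, hy]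
  · intro hy
    by_cases e : y = c
    · exact .inl e
    exact .inr ⟨fun e' => hb (e' ▸ hy), fun e' => ha (e' ▸ hy), .inr (.inr ⟨e, hy⟩)⟩

theorem sdiff_union_insert_erase_erase {L t : Finset α} (ht : t ⊆ L) (ha : a ∈ t) (hb : b ∈ t) :
    L \ t ∪ insert x ((t.erase a).erase b) = insert x ((L.erase a).erase b) := by
  ext y
  have := @ht y
  have ha' : y = a → y ∈ t := fun h => h ▸ ha
  have hb' : y = b → y ∈ t := fun h => h ▸ hb
  simp only [mem_union, mem_sdiff, mem_insert, mem_erase]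
  tauto

theorem sdiff_insert_erase_erase_union {L t : Finset α} (ha : a ∈ t) (hb : b ∈ t) (hx : x ∉ t)
    (ht : insert x ((t.erase a).erase b) ⊆ L) :
    L \ insert x ((t.erase a).erase b) ∪ t = insert a (insert b (L.erase x)) := by
  ext y
  have := @ht y
  simp only [mem_union, mem_sdiff, mem_insert, mem_erase] at this ⊢
  constructor
  · rintro (⟨hy, hyc⟩ | hy)
    · exact .inr (.inr ⟨fun h => hyc (.inl h), hy⟩)
    · by_cases hya : y = a
      · exact .inl hya
      by_cases hyb : y = b
      · exact .inr (.inl hyb)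
      exact .inr (.inr ⟨by rintro rfl; exact hx hy, this (.inr ⟨hyb, hya, hy⟩)⟩)
  · rintro (rfl | rfl | ⟨hyx, hy⟩)
    · exact .inr ha
    · exact .inr hb
    · by_cases hyt : y ∈ t
      · exact .inr hyt
      · exact .inl ⟨hy, by tauto⟩

theorem image_erase_of_injOn {β : Type*} [DecidableEq β] {f : α → β} (hf : Set.InjOn f s)
    (ha : a ∈ s) : (s.erase a).image f = (s.image f).erase (f a) := by
  rw [← sdiff_singleton_eq_erase, image_sdiff_of_injOn hf (singleton_subset_iff.2 ha),
    image_singleton, sdiff_singleton_eq_erase]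

end Finset

def IsPartitionOf {α : Type*} [DecidableEq α] (P : Finset (Finset α)) (L : Finset α) : Prop :=
  (∀ c ∈ P, c.Nonempty) ∧ (∀ c ∈ P, ∀ d ∈ P, c ≠ d → Disjoint c d) ∧ P.biUnion id = L

namespace IsPartitionOf

variable {α : Type*} [DecidableEq α] {P R A : Finset (Finset α)} {L c d₁ d₂ e : Finset α}

theorem subset (hP : IsPartitionOf P L) (hc : c ∈ P) : c ⊆ L := by
  rw [← hP.2.2]
  exact subset_biUnion_of_mem id hc

theorem singleton (hc : c.Nonempty) : IsPartitionOf {c} c :=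
  ⟨by simpa using hc, by simp, by simp⟩

theorem pair (h₁ : d₁.Nonempty) (h₂ : d₂.Nonempty) (hdisj : d₁ ≠ d₂ → Disjoint d₁ d₂) :
    IsPartitionOf {d₁, d₂} (d₁ ∪ d₂) := by
  refine ⟨by simp [h₁, h₂], ?_, by simp⟩
  simp only [mem_insert, mem_singleton]
  rintro c (rfl | rfl) d (rfl | rfl) hcd
  exacts [absurd rfl hcd, hdisj hcd, (hdisj (Ne.symm hcd)).symm, absurd rfl hcd]

theorem biUnion_sdiff (hP : IsPartitionOf P L) (hR : R ⊆ P) :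
    (P \ R).biUnion id = L \ R.biUnion id := by
  ext x
  simp only [mem_biUnion, mem_sdiff, id, ← hP.2.2, not_exists, not_and]
  constructor
  · rintro ⟨c, ⟨hcP, hcR⟩, hx⟩
    refine ⟨⟨c, hcP, hx⟩, fun r hr hxr => ?_⟩
    exact disjoint_left.1 (hP.2.1 c hcP r (hR hr) (by rintro rfl; exact hcR hr)) hx hxr
  · rintro ⟨⟨c, hcP, hx⟩, hxR⟩
    exact ⟨c, ⟨hcP, fun hcR => hxR c hcR hx⟩, hx⟩

theorem replace (hP : IsPartitionOf P L) (hR : R ⊆ P) (hA : IsPartitionOf A (A.biUnion id))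
    (hdisj : Disjoint (A.biUnion id) (L \ R.biUnion id)) :
    IsPartitionOf (P \ R ∪ A) (L \ R.biUnion id ∪ A.biUnion id) := by
  have hrest : ∀ c ∈ P \ R, c ⊆ L \ R.biUnion id := fun c hc =>
    hP.biUnion_sdiff hR ▸ subset_biUnion_of_mem id hc
  have hcross : ∀ c ∈ P \ R, ∀ d ∈ A, Disjoint c d := fun c hc d hd =>
    (hdisj.mono_left (subset_biUnion_of_mem id hd)).symm.mono_left (hrest c hc)
  refine ⟨fun c hc => ?_, fun c hc d hd hcd => ?_, by rw [union_biUnion, hP.biUnion_sdiff hR]⟩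
  · rcases mem_union.1 hc with hc | hc
    exacts [hP.1 c (mem_sdiff.1 hc).1, hA.1 c hc]
  · rcases mem_union.1 hc with hc | hc <;> rcases mem_union.1 hd with hd | hd
    · exact hP.2.1 c (mem_sdiff.1 hc).1 d (mem_sdiff.1 hd).1 hcd
    · exact hcross c hc d hd
    · exact (hcross d hd c hc).symm
    · exact hA.2.1 c hc d hd hcd

theorem merge (hP : IsPartitionOf P L) {c₁ c₂ : Finset α} (h₁ : c₁ ∈ P) (h₂ : c₂ ∈ P)
    (he : e.Nonempty) (hdisj : Disjoint e (L \ (c₁ ∪ c₂))) :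
    IsPartitionOf (insert e ((P.erase c₁).erase c₂)) (L \ (c₁ ∪ c₂) ∪ e) := by
  have := hP.replace (R := {c₁, c₂}) (A := {e}) (by simp [insert_subset_iff, h₁, h₂])
    (by simpa using singleton he) (by simpa using hdisj)
  convert this using 1
  · ext d
    simp only [mem_insert, mem_erase, mem_union, mem_sdiff, mem_singleton]
    tauto
  · simp

theorem split (hP : IsPartitionOf P L) (he : e ∈ P) (h₁ : d₁.Nonempty) (h₂ : d₂.Nonempty)
    (h₁₂ : d₁ ≠ d₂ → Disjoint d₁ d₂) (hdisj : Disjoint (d₁ ∪ d₂) (L \ e)) :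
    IsPartitionOf (insert d₁ (insert d₂ (P.erase e))) (L \ e ∪ (d₁ ∪ d₂)) := by
  have := hP.replace (R := {e}) (A := {d₁, d₂}) (by simpa using he)
    (by simpa using pair h₁ h₂ h₁₂) (by simpa using hdisj)
  convert this using 1
  · ext d
    simp only [mem_insert, mem_erase, mem_union, mem_sdiff, mem_singleton]
    tauto
  · simp

end IsPartitionOf

def OccsWF (A : MLLForm) (O : Finset (List Bool)) : Prop :=
  (∀ u ∈ O, (A.subAt u).isSome) ∧ ∀ u ∈ O, ∀ v ∈ O, u ≠ v → ¬ u <+: v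

def expandOccs (O : Finset (List Bool)) (u : List Bool) : Finset (List Bool) :=
  insert (u ++ [false]) (insert (u ++ [true]) (O.erase u))

theorem expandOccs_image_cons_union {A B : Finset (List Bool)} {b : Bool} {u : List Bool}
    (hB : b :: u ∉ B) :
    expandOccs (A.image (b :: ·) ∪ B) (b :: u) = (expandOccs A u).image (b :: ·) ∪ B := by
  simp only [expandOccs, image_insert, image_erase List.cons_injective, erase_union_distrib,
    erase_eq_of_notMem hB, insert_union, List.cons_append]

theorem expandOccs_union_image_cons {A B : Finset (List Bool)} {b : Bool} {u : List Bool}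
    (hA : b :: u ∉ A) :
    expandOccs (A ∪ B.image (b :: ·)) (b :: u) = A ∪ (expandOccs B u).image (b :: ·) := by
  rw [union_comm, expandOccs_image_cons_union hA, union_comm]

namespace OccsWF

variable {A : MLLForm} {O : Finset (List Bool)} {u : List Bool}

theorem not_mem_of_concat_mem (h : OccsWF A O) {b : Bool} (hb : u ++ [b] ∈ O) : u ∉ O :=
  fun hu => h.2 u hu _ hb (by simp) (List.prefix_append u [b])

theorem contract (h : OccsWF A O) (hu : (A.subAt u).isSome)
    (h₀ : u ++ [false] ∈ O) (h₁ : u ++ [true] ∈ O) :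
    OccsWF A (insert u ((O.erase (u ++ [false])).erase (u ++ [true]))) := by
  have hO : ∀ w ∈ (O.erase (u ++ [false])).erase (u ++ [true]), w ∈ O ∧ ¬ u <+: w := by
    intro w hw
    simp only [mem_erase] at hw
    obtain ⟨hw₁, hw₀, hw⟩ := hw
    refine ⟨hw, fun hpre => ?_⟩
    obtain ⟨b, hb⟩ := List.concat_prefix_of_prefix_of_ne hpre
      (by rintro rfl; exact h.not_mem_of_concat_mem h₀ hw)
    cases b
    · exact h.2 _ h₀ w hw (Ne.symm hw₀) hb
    · exact h.2 _ h₁ w hw (Ne.symm hw₁) hb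
  refine ⟨fun w hw => ?_, fun w hw v hv hwv hpre => ?_⟩
  · rcases mem_insert.1 hw with rfl | hw
    exacts [hu, h.1 w (hO w hw).1]
  · rcases mem_insert.1 hw with rfl | hw <;> rcases mem_insert.1 hv with rfl | hv
    · exact hwv rfl
    · exact (hO v hv).2 hpre
    · exact h.2 w (hO w hw).1 _ h₀ (by rintro rfl; exact (hO _ hw).2 (List.prefix_append v _))
        (hpre.trans (List.prefix_append v [false]))
    · exact h.2 w (hO w hw).1 v (hO v hv).1 hwv hpre

theorem expand (h : OccsWF A O) (hu : u ∈ O) (hc : ∀ b, (A.subAt (u ++ [b])).isSome) :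
    OccsWF A (expandOccs O u) := by
  have hchild : ∀ b, u ++ [b] ∉ O := fun b hb => h.not_mem_of_concat_mem hb hu
  have hnew : ∀ b, ∀ w ∈ O.erase u, ¬ u ++ [b] <+: w ∧ ¬ w <+: u ++ [b] := by
    intro b w hw
    obtain ⟨hwu, hw⟩ := mem_erase.1 hw
    refine ⟨fun hpre => h.2 u hu w hw (Ne.symm hwu) ((List.prefix_append u [b]).trans hpre),
      fun hpre => ?_⟩
    rcases List.prefix_concat_iff.1 hpre with rfl | hpre
    exacts [hchild b hw, h.2 w hw u hu hwu hpre]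
  have hsib : ∀ b b', b ≠ b' → ¬ u ++ [b] <+: u ++ [b'] := fun b b' hbb' hpre =>
    hbb' (by simpa using hpre.eq_of_length (by simp))
  simp only [OccsWF, expandOccs, forall_mem_insert]
  refine ⟨⟨hc false, hc true, fun w hw => h.1 w (mem_of_mem_erase hw)⟩,
    ⟨⟨fun hne => absurd rfl hne, fun _ => hsib false true (by decide),
      fun w hw _ => (hnew false w hw).1⟩,
     ⟨fun _ => hsib true false (by decide), fun hne => absurd rfl hne,
      fun w hw _ => (hnew true w hw).1⟩,
     fun w hw => ⟨fun _ => (hnew false w hw).2, fun _ => (hnew true w hw).2,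
      fun v hv => h.2 w (mem_of_mem_erase hw) v (mem_of_mem_erase hv)⟩⟩⟩

end OccsWF

namespace PPS

def child (x : Leaf) (b : Bool) : Leaf := (x.1, x.2 ++ [b])

theorem mem_leaves {S : PPS} {x : Leaf} : x ∈ S.leaves ↔ x.1 ∈ S.names ∧ x.2 ∈ S.occs x.1 := by
  obtain ⟨m, w⟩ := x
  simp [leaves]

theorem leaves_congr {S T : PPS} (hn : S.names = T.names)
    (ho : ∀ m ∈ S.names, S.occs m = T.occs m) : S.leaves = T.leaves := by
  ext x
  simp only [mem_leaves, ← hn]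
  exact and_congr_right fun hx => by rw [ho _ hx]

theorem wf_iff {S : PPS} : S.WF ↔
    (∀ n ∈ S.names, OccsWF (S.form n) (S.occs n)) ∧ IsPartitionOf S.part S.leaves := by
  simp only [WF, OccsWF, IsPartitionOf, forall_and, and_assoc]

namespace WF

variable {S : PPS}

theorem occsWF (hS : S.WF) {n : ℕ} (hn : n ∈ S.names) : OccsWF (S.form n) (S.occs n) :=
  (wf_iff.1 hS).1 n hn

theorem isPartitionOf (hS : S.WF) : IsPartitionOf S.part S.leaves :=
  (wf_iff.1 hS).2

theorem child_not_mem_leaves (hS : S.WF) {x : Leaf} (hx : x ∈ S.leaves) (b : Bool) :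
    child x b ∉ S.leaves := fun h =>
  (hS.occsWF (mem_leaves.1 hx).1).not_mem_of_concat_mem (mem_leaves.1 h).2 (mem_leaves.1 hx).2

theorem not_mem_leaves (hS : S.WF) {x : Leaf} {b : Bool} (h : child x b ∈ S.leaves) :
    x ∉ S.leaves :=
  fun hx => hS.child_not_mem_leaves hx b h

theorem injOn_image_part (hS : S.WF) {f : Leaf → Leaf} {n : ℕ} (hn : n ∉ S.names)
    (hf : Set.InjOn f {y | y.1 ≠ n}) : Set.InjOn (image f) S.part :=
  injOn_image_of_subset (hf.mono fun y hy (h : y.1 = n) => hn (h ▸ (mem_leaves.1 hy).1))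
    fun _ => hS.isPartitionOf.subset

end WF

def contractClass (x : Leaf) (c₁ c₂ : Finset Leaf) : Finset Leaf :=
  insert x (((c₁ ∪ c₂).erase (child x false)).erase (child x true))

def Linkable (A : Option MLLForm) (c₁ c₂ : Finset Leaf) : Prop :=
  (∃ a b, A = some (.parr a b)) ∧ c₁ = c₂ ∨ (∃ a b, A = some (.tens a b)) ∧ c₁ ≠ c₂

namespace Linkable

variable {A : MLLForm} {u : List Bool} {c₁ c₂ : Finset Leaf}

theorem isSome (h : Linkable (A.subAt u) c₁ c₂) : (A.subAt u).isSome := by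
  rcases h with ⟨⟨a, b, h⟩, -⟩ | ⟨⟨a, b, h⟩, -⟩ <;> simp [h]

theorem child_isSome (h : Linkable (A.subAt u) c₁ c₂) (b : Bool) :
    (A.subAt (u ++ [b])).isSome := by
  rcases h with ⟨⟨a, a', h⟩, -⟩ | ⟨⟨a, a', h⟩, -⟩ <;> cases b <;>
    simp [MLLForm.subAt_append, h, MLLForm.subAt]

theorem congr {A : Option MLLForm} {d₁ d₂ : Finset Leaf} (h : Linkable A c₁ c₂)
    (e : c₁ = c₂ ↔ d₁ = d₂) : Linkable A d₁ d₂ := by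
  rcases h with ⟨h, h'⟩ | ⟨h, h'⟩
  exacts [.inl ⟨h, e.1 h'⟩, .inr ⟨h, mt e.2 h'⟩]

end Linkable

/-- A par step (`c₁ = c₂`) or a tensor step (`c₁ ≠ c₂`) of parsing, contracting the children of
`x`. -/
structure Contracts (S T : PPS) (x : Leaf) (c₁ c₂ : Finset Leaf) : Prop where
  child_mem : ∀ b, child x b ∈ S.leaves
  mem_c₁ : c₁ ∈ S.part
  mem_c₂ : c₂ ∈ S.part
  child_mem_c₁ : child x false ∈ c₁
  child_mem_c₂ : child x true ∈ c₂
  linkable : Linkable ((S.form x.1).subAt x.2) c₁ c₂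
  names_eq : T.names = S.names
  form_eq : ∀ m ∈ S.names, T.form m = S.form m
  occs_eq : T.occs x.1 = insert x.2 (((S.occs x.1).erase (x.2 ++ [false])).erase (x.2 ++ [true]))
  occs_eq_of_ne : ∀ m ∈ S.names, m ≠ x.1 → T.occs m = S.occs m
  part_eq : T.part = insert (contractClass x c₁ c₂) ((S.part.erase c₁).erase c₂)

theorem parse_iff_exists_contracts {S T : PPS} :
    Parse S T ↔ ∃ x c₁ c₂, S.Contracts T x c₁ c₂ := by
  constructor
  · rintro (⟨n, u, a, b, c, hn, hf, h₀, h₁, hc, hc₀, hc₁, hnames, hforms, hoccs, hoccso, hpart⟩ |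
      ⟨n, u, a, b, c₁, c₂, hn, hf, h₀, h₁, hc₁, hc₂, hne, hm₀, hm₁, hnames, hforms, hoccs, hoccso,
        hpart⟩)
    · refine ⟨(n, u), c, c, ⟨fun b => ?_, hc, hc, hc₀, hc₁, .inl ⟨⟨a, b, hf⟩, rfl⟩, hnames, hforms,
        hoccs, hoccso, by rw [hpart, contractClass, union_self, erase_idem]; rfl⟩⟩
      cases b <;> exact mem_leaves.2 ⟨hn, ‹_›⟩
    · refine ⟨(n, u), c₁, c₂, ⟨fun b => ?_, hc₁, hc₂, hm₀, hm₁, .inr ⟨⟨a, b, hf⟩, hne⟩, hnames,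
        hforms, hoccs, hoccso, hpart⟩⟩
      cases b <;> exact mem_leaves.2 ⟨hn, ‹_›⟩
  · rintro ⟨⟨n, u⟩, c₁, c₂, h⟩
    have hn := (mem_leaves.1 (h.child_mem false)).1
    have h₀ := (mem_leaves.1 (h.child_mem false)).2
    have h₁ := (mem_leaves.1 (h.child_mem true)).2
    rcases h.linkable with ⟨⟨a, b, hf⟩, rfl⟩ | ⟨⟨a, b, hf⟩, hne⟩
    · refine Parse.parr S T n u a b c₁ hn hf h₀ h₁ h.mem_c₁ h.child_mem_c₁ h.child_mem_c₂
        h.names_eq h.form_eq h.occs_eq h.occs_eq_of_ne ?_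
      rw [h.part_eq, contractClass, union_self, erase_idem]
      rfl
    · exact Parse.tens S T n u a b c₁ c₂ hn hf h₀ h₁ h.mem_c₁ h.mem_c₂ hne h.child_mem_c₁
        h.child_mem_c₂ h.names_eq h.form_eq h.occs_eq h.occs_eq_of_ne h.part_eq

/-- Agreement on the conclusions: the rules of `SeqNet` only determine their conclusion up to
this. -/
structure Equiv (S T : PPS) : Prop where
  names_eq : S.names = T.names
  form_eq : ∀ m ∈ S.names, S.form m = T.form m
  occs_eq : ∀ m ∈ S.names, S.occs m = T.occs m
  part_eq : S.part = T.part

theorem Equiv.trans {S T U : PPS} (h : S.Equiv T) (h' : T.Equiv U) : S.Equiv U :=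
  ⟨h.names_eq.trans h'.names_eq,
    fun m hm => (h.form_eq m hm).trans (h'.form_eq m (h.names_eq ▸ hm)),
    fun m hm => (h.occs_eq m hm).trans (h'.occs_eq m (h.names_eq ▸ hm)), h.part_eq.trans h'.part_eq⟩

def expand (T : PPS) (x : Leaf) (d₁ d₂ : Finset Leaf) : PPS where
  names := T.names
  form := T.form
  occs := Function.update T.occs x.1 (expandOccs (T.occs x.1) x.2)
  part := insert d₁ (insert d₂ (T.part.erase (contractClass x d₁ d₂)))

namespace Contracts

variable {S T : PPS} {x : Leaf} {c₁ c₂ : Finset Leaf}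

theorem leaves_eq (h : S.Contracts T x c₁ c₂) :
    T.leaves = insert x ((S.leaves.erase (child x false)).erase (child x true)) := by
  obtain ⟨n, u⟩ := x
  have hn : n ∈ S.names := (mem_leaves.1 (h.child_mem false)).1
  ext ⟨m, w⟩
  by_cases hm : m = n
  · subst hm
    simp [mem_leaves, h.names_eq, h.occs_eq, child, hn]
  · simp only [mem_leaves, h.names_eq, mem_insert, mem_erase, child, ne_eq, Prod.mk.injEq, hm,
      false_and, not_false_eq_true, true_and, false_or]
    exact and_congr_right fun hmS => by rw [h.occs_eq_of_ne m hmS hm]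

theorem fst_mem_names (h : S.Contracts T x c₁ c₂) (hS : S.WF) :
    ∀ y ∈ insert x (c₁ ∪ c₂), y.1 ∈ S.names := by
  simp only [mem_insert, mem_union, forall_eq_or_imp]
  refine ⟨(mem_leaves.1 (h.child_mem false)).1, fun y hy => (mem_leaves.1 ?_).1⟩
  exact hy.elim (hS.isPartitionOf.subset h.mem_c₁ ·) (hS.isPartitionOf.subset h.mem_c₂ ·)

theorem wf (h : S.Contracts T x c₁ c₂) (hS : S.WF) : T.WF := by
  have hxS : x ∉ S.leaves := hS.not_mem_leaves (h.child_mem false)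
  refine wf_iff.2 ⟨fun m hm => ?_, ?_⟩
  · rw [h.names_eq] at hm
    rw [h.form_eq m hm]
    by_cases hmx : m = x.1
    · subst hmx
      rw [h.occs_eq]
      exact (hS.occsWF hm).contract h.linkable.isSome (mem_leaves.1 (h.child_mem false)).2
        (mem_leaves.1 (h.child_mem true)).2
    · rw [h.occs_eq_of_ne m hm hmx]
      exact hS.occsWF hm
  · have hsub : c₁ ∪ c₂ ⊆ S.leaves :=
      union_subset (hS.isPartitionOf.subset h.mem_c₁) (hS.isPartitionOf.subset h.mem_c₂)
    rw [h.part_eq, h.leaves_eq, ← sdiff_union_insert_erase_erase hsub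
      (mem_union_left _ h.child_mem_c₁) (mem_union_right _ h.child_mem_c₂)]
    refine hS.isPartitionOf.merge h.mem_c₁ h.mem_c₂ ⟨x, mem_insert_self _ _⟩ ?_
    rw [disjoint_left]
    simp only [contractClass, mem_insert, mem_erase, mem_sdiff]
    rintro y (rfl | ⟨-, -, hy⟩) ⟨hyS, hyc⟩
    exacts [hxS hyS, hyc hy]

theorem congr_right {T' : PPS} (h : S.Contracts T x c₁ c₂) (e : T.Equiv T') :
    S.Contracts T' x c₁ c₂ where
  __ := h
  names_eq := e.names_eq ▸ h.names_eq
  form_eq m hm := (e.form_eq m (h.names_eq ▸ hm)).symm.trans (h.form_eq m hm)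
  occs_eq := (e.occs_eq _ (h.names_eq ▸ (mem_leaves.1 (h.child_mem false)).1)).symm.trans h.occs_eq
  occs_eq_of_ne m hm hmx := (e.occs_eq m (h.names_eq ▸ hm)).symm.trans (h.occs_eq_of_ne m hm hmx)
  part_eq := e.part_eq ▸ h.part_eq

theorem equiv_expand (h : S.Contracts T x c₁ c₂) (hS : S.WF) :
    S.Equiv (T.expand x c₁ c₂) := by
  have hxS : x ∉ S.leaves := hS.not_mem_leaves (h.child_mem false)
  refine ⟨h.names_eq.symm, fun m hm => (h.form_eq m hm).symm, fun m hm => ?_, ?_⟩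
  · by_cases hmx : m = x.1
    · subst hmx
      simp only [expand, Function.update_self, h.occs_eq, expandOccs]
      exact (insert_insert_erase_insert_erase_erase (mem_leaves.1 (h.child_mem false)).2
        (mem_leaves.1 (h.child_mem true)).2 fun hu => hxS (mem_leaves.2 ⟨hm, hu⟩)).symm
    · simp [expand, hmx, h.occs_eq_of_ne m hm hmx]
  · simp only [expand, h.part_eq]
    exact (insert_insert_erase_insert_erase_erase h.mem_c₁ h.mem_c₂ fun hc =>
      hxS (hS.isPartitionOf.subset hc (mem_insert_self _ _))).symm

end Contracts

structure CanExpand (T : PPS) (x : Leaf) (d₁ d₂ : Finset Leaf) : Prop where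
  mem : x ∈ T.leaves
  linkable : Linkable ((T.form x.1).subAt x.2) d₁ d₂
  contractClass_mem : contractClass x d₁ d₂ ∈ T.part
  child_mem_d₁ : child x false ∈ d₁
  child_mem_d₂ : child x true ∈ d₂
  not_mem : x ∉ d₁ ∪ d₂
  disjoint : d₁ ≠ d₂ → Disjoint d₁ d₂

namespace CanExpand

variable {T : PPS} {x : Leaf} {d₁ d₂ : Finset Leaf}

theorem leaves_expand (h : T.CanExpand x d₁ d₂) :
    (T.expand x d₁ d₂).leaves =
      insert (child x false) (insert (child x true) (T.leaves.erase x)) := by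
  obtain ⟨n, u⟩ := x
  have hn : n ∈ T.names := (mem_leaves.1 h.mem).1
  ext ⟨m, w⟩
  by_cases hm : m = n
  · subst hm
    simp [mem_leaves, expand, expandOccs, child, hn]
  · simp [mem_leaves, expand, child, hm]

theorem contracts (h : T.CanExpand x d₁ d₂) (hT : T.WF) :
    (T.expand x d₁ d₂).Contracts T x d₁ d₂ := by
  have hx := mem_leaves.1 h.mem
  have hch : ∀ b, child x b ∉ T.leaves := hT.child_not_mem_leaves h.mem
  have hd : ∀ b, ∀ d ∈ T.part, child x b ∉ d := fun b d hd hb =>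
    hch b (hT.isPartitionOf.subset hd hb)
  refine ⟨fun b => ?_, mem_insert_self _ _, mem_insert_of_mem (mem_insert_self _ _),
    h.child_mem_d₁, h.child_mem_d₂, h.linkable, rfl, fun _ _ => rfl, ?_,
    fun m _ hm => (Function.update_of_ne hm _ _).symm, ?_⟩
  · rw [h.leaves_expand]
    cases b <;> simp
  · simp only [expand, Function.update_self, expandOccs]
    exact (insert_erase_erase_insert_insert_erase hx.2
      (fun hb => hch false (mem_leaves.2 ⟨hx.1, hb⟩))
      (fun hb => hch true (mem_leaves.2 ⟨hx.1, hb⟩))).symm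
  · exact (insert_erase_erase_insert_insert_erase h.contractClass_mem
      (fun h₁ => hd false d₁ h₁ h.child_mem_d₁) (fun h₂ => hd true d₂ h₂ h.child_mem_d₂)).symm

theorem wf (h : T.CanExpand x d₁ d₂) (hT : T.WF) : (T.expand x d₁ d₂).WF := by
  have hx := mem_leaves.1 h.mem
  have hch := hT.child_not_mem_leaves h.mem
  refine wf_iff.2 ⟨fun m hm => ?_, ?_⟩
  · by_cases hmx : m = x.1
    · subst hmx
      simp only [expand, Function.update_self]
      exact (hT.occsWF hm).expand hx.2 h.linkable.child_isSome
    · simp only [expand, Function.update_of_ne hmx]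
      exact hT.occsWF hm
  · rw [h.leaves_expand, ← sdiff_insert_erase_erase_union (mem_union_left _ h.child_mem_d₁)
      (mem_union_right _ h.child_mem_d₂) h.not_mem (hT.isPartitionOf.subset h.contractClass_mem)]
    refine hT.isPartitionOf.split h.contractClass_mem ⟨_, h.child_mem_d₁⟩ ⟨_, h.child_mem_d₂⟩
      h.disjoint ?_
    rw [disjoint_left]
    intro y hy hyL
    refine (mem_sdiff.1 hyL).2 (mem_insert_of_mem (mem_erase.2 ⟨?_, mem_erase.2 ⟨?_, hy⟩⟩)) <;>
      rintro rfl <;> exact hch _ (mem_sdiff.1 hyL).1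

end CanExpand

section Relabel

variable {m₀ n nB nC : ℕ} {b : Bool} {x : Leaf}

def unrelab1 (m₀ n : ℕ) (b : Bool) (x : Leaf) : Leaf :=
  if x.1 = n ∧ x.2.head? = some b then (m₀, x.2.tail) else x

theorem relab1_mk_self (v : List Bool) : relab1 m₀ n b (m₀, v) = (n, b :: v) := if_pos rfl

theorem relab1_of_ne (h : x.1 ≠ m₀) : relab1 m₀ n b x = x := if_neg h

theorem relab1_child (c : Bool) : relab1 m₀ n b (child x c) = child (relab1 m₀ n b x) c := by
  unfold relab1 child
  split_ifs <;> rfl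

theorem unrelab1_relab1 (h : x.1 ≠ n) : unrelab1 m₀ n b (relab1 m₀ n b x) = x := by
  obtain ⟨m, v⟩ := x
  by_cases hm : m = m₀ <;> simp_all [relab1, unrelab1]

theorem relab1_unrelab1 (h : x.1 ≠ m₀) : relab1 m₀ n b (unrelab1 m₀ n b x) = x := by
  obtain ⟨m, _ | ⟨b', v⟩⟩ := x <;> by_cases hm : m = n <;> simp_all [relab1, unrelab1]
  split_ifs <;> simp_all

def parRelabel (nB nC n : ℕ) (x : Leaf) : Leaf := relab1 nB n false (relab1 nC n true x)

def parUnrelabel (nB nC n : ℕ) (x : Leaf) : Leaf := unrelab1 nC n true (unrelab1 nB n false x)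

theorem parRelabel_child (c : Bool) :
    parRelabel nB nC n (child x c) = child (parRelabel nB nC n x) c := by
  simp only [parRelabel, relab1_child]

theorem parUnrelabel_parRelabel (hnB : n ≠ nB) (h : x.1 ≠ n) :
    parUnrelabel nB nC n (parRelabel nB nC n x) = x := by
  obtain ⟨m, v⟩ := x
  by_cases hB : m = nB <;> by_cases hC : m = nC <;>
    simp_all [parRelabel, parUnrelabel, relab1, unrelab1, Ne.symm hnB]

theorem parRelabel_parUnrelabel (hBC : nB ≠ nC) (hB : x.1 ≠ nB) (hC : x.1 ≠ nC) :
    parRelabel nB nC n (parUnrelabel nB nC n x) = x := by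
  obtain ⟨m, _ | ⟨_ | _, v⟩⟩ := x <;> by_cases hm : m = n <;>
    simp_all [parRelabel, parUnrelabel, relab1, unrelab1, Ne.symm hBC, eq_comm (a := nB)]

theorem injOn_relab1 : Set.InjOn (relab1 m₀ n b) {y | y.1 ≠ n} :=
  Set.LeftInvOn.injOn (f₁' := unrelab1 m₀ n b) fun _ hy => unrelab1_relab1 hy

theorem injOn_parRelabel (hnB : n ≠ nB) :
    Set.InjOn (parRelabel nB nC n) {y | y.1 ≠ n} :=
  Set.LeftInvOn.injOn (f₁' := parUnrelabel nB nC n) fun _ hy =>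
    parUnrelabel_parRelabel hnB hy

end Relabel

def parRule (S : PPS) (nB nC n : ℕ) : PPS where
  names := insert n (S.names \ {nB, nC})
  form := Function.update S.form n (.parr (S.form nB) (S.form nC))
  occs := Function.update S.occs n
    ((S.occs nB).image (false :: ·) ∪ (S.occs nC).image (true :: ·))
  part := S.part.image (Finset.image (parRelabel nB nC n))

def tensRule (S₁ S₂ : PPS) (nB nC n : ℕ) : PPS where
  names := insert n (S₁.names.erase nB ∪ S₂.names.erase nC)
  form := Function.update (fun m => if m ∈ S₁.names then S₁.form m else S₂.form m) n
    (.tens (S₁.form nB) (S₂.form nC))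
  occs := Function.update (fun m => if m ∈ S₁.names then S₁.occs m else S₂.occs m) n
    ((S₁.occs nB).image (false :: ·) ∪ (S₂.occs nC).image (true :: ·))
  part := S₁.part.image (Finset.image (relab1 nB n false)) ∪
    S₂.part.image (Finset.image (relab1 nC n true))

end PPS

open PPS

inductive StrictSeqNet : PPS → Prop
  | ax (S : PPS) : Parsed S → S.WF → StrictSeqNet S
  | parr (S₀ S : PPS) (nB nC n : ℕ) : StrictSeqNet S₀ → nB ∈ S₀.names → nC ∈ S₀.names →
      nB ≠ nC → n ∉ S₀.names → S.Equiv (S₀.parRule nB nC n) → S.WF → StrictSeqNet S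
  | tens (S₁ S₂ S : PPS) (nB nC n : ℕ) : StrictSeqNet S₁ → StrictSeqNet S₂ →
      Disjoint S₁.names S₂.names → nB ∈ S₁.names → nC ∈ S₂.names → n ∉ S₁.names ∪ S₂.names →
      S.Equiv (tensRule S₁ S₂ nB nC n) → S.WF → StrictSeqNet S

namespace StrictSeqNet

theorem wf {S : PPS} (h : StrictSeqNet S) : S.WF := by
  cases h <;> assumption

theorem toSeqNet {S : PPS} (h : StrictSeqNet S) : SeqNet S := by
  induction h with
  | ax S hS _ => exact SeqNet.ax S hS.1 hS.2
  | parr S₀ S nB nC n _ hB hC hBC hn e _ ih =>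
    have hS : ∀ m ∈ S₀.names \ {nB, nC}, m ∈ S.names ∧ m ≠ n := fun m hm =>
      ⟨e.names_eq ▸ mem_insert_of_mem hm, by rintro rfl; exact hn (mem_sdiff.1 hm).1⟩
    have hnS : n ∈ S.names := e.names_eq ▸ mem_insert_self _ _
    refine SeqNet.parr S₀ S nB nC n ih hB hC hBC (fun h => hn (mem_sdiff.1 h).1) e.names_eq
      ((e.form_eq n hnS).trans (Function.update_self ..)) (fun m hm => ?_)
      ((e.occs_eq n hnS).trans (Function.update_self ..)) (fun m hm => ?_) e.part_eq
    · exact (e.form_eq m (hS m hm).1).trans (Function.update_of_ne (hS m hm).2 ..)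
    · exact (e.occs_eq m (hS m hm).1).trans (Function.update_of_ne (hS m hm).2 ..)
  | tens S₁ S₂ S nB nC n _ _ hdisj hB hC hn e _ ih₁ ih₂ =>
    have hnS : n ∈ S.names := e.names_eq ▸ mem_insert_self _ _
    have hS₁ : ∀ m ∈ S₁.names.erase nB, m ∈ S.names ∧ m ≠ n := fun m hm =>
      ⟨e.names_eq ▸ mem_insert_of_mem (mem_union_left _ hm),
        by rintro rfl; exact hn (mem_union_left _ (mem_of_mem_erase hm))⟩
    have hS₂ : ∀ m ∈ S₂.names.erase nC, m ∈ S.names ∧ m ≠ n ∧ m ∉ S₁.names := fun m hm =>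
      ⟨e.names_eq ▸ mem_insert_of_mem (mem_union_right _ hm),
        by rintro rfl; exact hn (mem_union_right _ (mem_of_mem_erase hm)),
        disjoint_right.1 hdisj (mem_of_mem_erase hm)⟩
    refine SeqNet.tens S₁ S₂ S nB nC n ih₁ ih₂ hdisj hB hC (fun h => hn (mem_sdiff.1 h).1)
      e.names_eq ((e.form_eq n hnS).trans (by simp [tensRule])) (fun m hm => ?_)
      (fun m hm => ?_) ((e.occs_eq n hnS).trans (by simp [tensRule])) (fun m hm => ?_)
      (fun m hm => ?_) e.part_eq
    · simp [e.form_eq m (hS₁ m hm).1, tensRule, (hS₁ m hm).2, mem_of_mem_erase hm]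
    · simp [e.form_eq m (hS₂ m hm).1, tensRule, (hS₂ m hm).2.1, (hS₂ m hm).2.2]
    · simp [e.occs_eq m (hS₁ m hm).1, tensRule, (hS₁ m hm).2, mem_of_mem_erase hm]
    · simp [e.occs_eq m (hS₂ m hm).1, tensRule, (hS₂ m hm).2.1, (hS₂ m hm).2.2]

end StrictSeqNet

namespace PPS

variable {f : Leaf → Leaf} {x : Leaf} {d₁ d₂ : Finset Leaf}

theorem image_contractClass (hinj : Set.InjOn f (insert x (d₁ ∪ d₂)))
    (hchild : ∀ b, f (child x b) = child (f x) b) (h₁ : child x false ∈ d₁)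
    (h₂ : child x true ∈ d₂) :
    (contractClass x d₁ d₂).image f = contractClass (f x) (d₁.image f) (d₂.image f) := by
  have hinj' : Set.InjOn f ↑(d₁ ∪ d₂) := hinj.mono (by simp)
  have h₂' : child x true ∈ (d₁ ∪ d₂).erase (child x false) :=
    mem_erase.2 ⟨by simp [child], mem_union_right _ h₂⟩
  rw [contractClass, contractClass, image_insert, image_erase_of_injOn (hinj'.mono (by simp)) h₂',
    image_erase_of_injOn hinj' (mem_union_left _ h₁), image_union, hchild, hchild]

theorem image_expand_part {T : PPS} (hinj : Set.InjOn f (insert x (d₁ ∪ d₂)))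
    (hchild : ∀ b, f (child x b) = child (f x) b) (h₁ : child x false ∈ d₁)
    (h₂ : child x true ∈ d₂) (hP : Set.InjOn (Finset.image f) T.part)
    (hcc : contractClass x d₁ d₂ ∈ T.part) :
    (T.expand x d₁ d₂).part.image (image f) = insert (d₁.image f) (insert (d₂.image f)
      ((T.part.image (image f)).erase (contractClass (f x) (d₁.image f) (d₂.image f)))) := by
  rw [expand, image_insert, image_insert, image_erase_of_injOn hP hcc,
    image_contractClass hinj hchild h₁ h₂]

theorem expand_parRule_equiv {T : PPS} (hT : T.WF) {nB nC n : ℕ} (hB : nB ∈ T.names)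
    (hBC : nB ≠ nC) (hn : n ∉ T.names) (hx : x.1 ∈ T.names)
    (hinj : Set.InjOn (parRelabel nB nC n) (insert x (d₁ ∪ d₂))) (h₁ : child x false ∈ d₁)
    (h₂ : child x true ∈ d₂) (hcc : contractClass x d₁ d₂ ∈ T.part) :
    ((T.parRule nB nC n).expand (parRelabel nB nC n x) (d₁.image (parRelabel nB nC n))
      (d₂.image (parRelabel nB nC n))).Equiv ((T.expand x d₁ d₂).parRule nB nC n) := by
  have hnB : n ≠ nB := fun h => hn (h ▸ hB)
  refine ⟨rfl, fun _ _ => rfl, fun m hm => ?_, ?_⟩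
  · obtain ⟨n₀, u₀⟩ := x
    simp only at hx
    have hmn : m ≠ n → m ≠ nB ∧ m ≠ nC := fun h => by
      simp_all [expand, parRule]
    by_cases h0B : n₀ = nB
    · subst h0B
      have : parRelabel n₀ nC n (n₀, u₀) = (n, false :: u₀) := by simp [parRelabel, relab1, hBC]
      rw [this]
      by_cases hm' : m = n
      · subst hm'
        simp only [expand, parRule, Function.update_self, Function.update_of_ne hBC.symm]
        exact expandOccs_image_cons_union (by simp)
      · simp [expand, parRule, hm', (hmn hm').1]
    by_cases h0C : n₀ = nC
    · subst h0C
      have : parRelabel nB n₀ n (n₀, u₀) = (n, true :: u₀) := by simp [parRelabel, relab1, hnB]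
      rw [this]
      by_cases hm' : m = n
      · subst hm'
        simp only [expand, parRule, Function.update_self, Function.update_of_ne hBC]
        exact expandOccs_union_image_cons (by simp)
      · simp [expand, parRule, hm', (hmn hm').2]
    · have : parRelabel nB nC n (n₀, u₀) = (n₀, u₀) := by simp [parRelabel, relab1, h0B, h0C]
      rw [this]
      have h0n : n₀ ≠ n := fun h => hn (h ▸ hx)
      by_cases hm' : m = n
      · subst hm'
        simp [expand, parRule, Function.update_apply, h0n.symm, Ne.symm h0B, Ne.symm h0C]
      · simp [expand, parRule, hm', Function.update_apply, h0n]
  · exact (image_expand_part hinj (fun _ => parRelabel_child _) h₁ h₂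
      (hT.injOn_image_part hn (injOn_parRelabel hnB)) hcc).symm

theorem relab1_ne_relab1 {N₁ N₂ : Finset ℕ} (hdisj : Disjoint N₁ N₂) {m₁ m₂ n : ℕ}
    (hn₁ : n ∉ N₁) (hn₂ : n ∉ N₂) {y z : Leaf} (hy : y.1 ∈ N₁) (hz : z.1 ∈ N₂) :
    relab1 m₁ n false y ≠ relab1 m₂ n true z := by
  have hyz : y.1 ≠ z.1 := fun h => disjoint_left.1 hdisj hy (h ▸ hz)
  unfold relab1
  split_ifs
  · simp
  · exact fun h => by subst h; exact hn₂ hz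
  · exact fun h => by subst h; exact hn₁ hy
  · exact fun h => hyz (congrArg Prod.fst h)

theorem expand_tensRule_left_equiv {T₁ T₂ : PPS} (hT₁ : T₁.WF) (hT₂ : T₂.WF)
    (hdisj : Disjoint T₁.names T₂.names) {nB nC n : ℕ} (hB : nB ∈ T₁.names)
    (hn : n ∉ T₁.names ∪ T₂.names) (hx : x.1 ∈ T₁.names)
    (hinj : Set.InjOn (relab1 nB n false) (insert x (d₁ ∪ d₂)))
    (h₁ : child x false ∈ d₁) (h₂ : child x true ∈ d₂) (hcc : contractClass x d₁ d₂ ∈ T₁.part) :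
    ((tensRule T₁ T₂ nB nC n).expand (relab1 nB n false x) (d₁.image (relab1 nB n false))
      (d₂.image (relab1 nB n false))).Equiv (tensRule (T₁.expand x d₁ d₂) T₂ nB nC n) := by
  have hn₁ : n ∉ T₁.names := fun h => hn (mem_union_left _ h)
  have hn₂ : n ∉ T₂.names := fun h => hn (mem_union_right _ h)
  have hxn : x.1 ≠ n := fun h => hn₁ (h ▸ hx)
  refine ⟨rfl, fun _ _ => rfl, fun m hm => ?_, ?_⟩
  · obtain ⟨n₀, u₀⟩ := x
    simp only at hx hxn
    have hmB : m ≠ n → m ≠ nB := fun h hmB => by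
      subst hmB
      simp_all [expand, tensRule, disjoint_left.1 hdisj hB]
    by_cases h0B : n₀ = nB
    · subst h0B
      rw [relab1_mk_self]
      by_cases hm' : m = n
      · subst hm'
        simp only [expand, tensRule, Function.update_self]
        exact expandOccs_image_cons_union (by simp)
      · simp [expand, tensRule, hm', hmB hm']
    · rw [relab1_of_ne h0B]
      by_cases hm' : m = n
      · subst hm'
        simp [expand, tensRule, Function.update_apply, hxn, Ne.symm hxn, Ne.symm h0B]
      · simp [expand, tensRule, Function.update_apply, hm', hx]
        split_ifs <;> simp_all
  · have hnot : contractClass (relab1 nB n false x) (d₁.image (relab1 nB n false))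
        (d₂.image (relab1 nB n false)) ∉ T₂.part.image (image (relab1 nC n true)) := by
      simp only [mem_image, not_exists, not_and]
      intro e he hce
      have : relab1 nB n false x ∈ e.image (relab1 nC n true) := hce ▸ mem_insert_self _ _
      obtain ⟨z, hz, hzx⟩ := mem_image.1 this
      exact relab1_ne_relab1 hdisj hn₁ hn₂ hx (mem_leaves.1 (hT₂.isPartitionOf.subset he hz)).1
        hzx.symm
    simp only [expand, tensRule]
    rw [image_insert, image_insert, image_erase_of_injOn _ hcc, image_contractClass hinj
      (fun _ => relab1_child _) h₁ h₂, erase_union_distrib, erase_eq_of_notMem hnot,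
      insert_union, insert_union]
    exact hT₁.injOn_image_part hn₁ injOn_relab1

theorem expand_tensRule_right_equiv {T₁ T₂ : PPS} (hT₁ : T₁.WF) (hT₂ : T₂.WF)
    (hdisj : Disjoint T₁.names T₂.names) {nB nC n : ℕ} (hC : nC ∈ T₂.names)
    (hn : n ∉ T₁.names ∪ T₂.names) (hx : x.1 ∈ T₂.names)
    (hinj : Set.InjOn (relab1 nC n true) (insert x (d₁ ∪ d₂)))
    (h₁ : child x false ∈ d₁) (h₂ : child x true ∈ d₂) (hcc : contractClass x d₁ d₂ ∈ T₂.part) :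
    ((tensRule T₁ T₂ nB nC n).expand (relab1 nC n true x) (d₁.image (relab1 nC n true))
      (d₂.image (relab1 nC n true))).Equiv (tensRule T₁ (T₂.expand x d₁ d₂) nB nC n) := by
  have hn₁ : n ∉ T₁.names := fun h => hn (mem_union_left _ h)
  have hn₂ : n ∉ T₂.names := fun h => hn (mem_union_right _ h)
  have hxn : x.1 ≠ n := fun h => hn₂ (h ▸ hx)
  have hx₁ : x.1 ∉ T₁.names := disjoint_right.1 hdisj hx
  refine ⟨rfl, fun _ _ => rfl, fun m hm => ?_, ?_⟩
  · obtain ⟨n₀, u₀⟩ := x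
    simp only at hx hxn hx₁
    have hmC : m ≠ n → m ≠ nC := fun h hmC => by
      subst hmC
      simp_all [expand, tensRule, disjoint_right.1 hdisj hC]
    by_cases h0C : n₀ = nC
    · subst h0C
      rw [relab1_mk_self]
      by_cases hm' : m = n
      · subst hm'
        simp only [expand, tensRule, Function.update_self]
        exact expandOccs_union_image_cons (by simp)
      · simp [expand, tensRule, hm', hmC hm']
    · rw [relab1_of_ne h0C]
      by_cases hm' : m = n
      · subst hm'
        simp [expand, tensRule, Function.update_apply, hxn, Ne.symm hxn, Ne.symm h0C]
      · simp [expand, tensRule, Function.update_apply, hm', hx₁]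
        split_ifs <;> simp_all
  · have hnot : contractClass (relab1 nC n true x) (d₁.image (relab1 nC n true))
        (d₂.image (relab1 nC n true)) ∉ T₁.part.image (image (relab1 nB n false)) := by
      simp only [mem_image, not_exists, not_and]
      intro e he hce
      have : relab1 nC n true x ∈ e.image (relab1 nB n false) := hce ▸ mem_insert_self _ _
      obtain ⟨z, hz, hzx⟩ := mem_image.1 this
      exact relab1_ne_relab1 hdisj hn₁ hn₂ (mem_leaves.1 (hT₁.isPartitionOf.subset he hz)).1 hx
        hzx
    simp only [expand, tensRule]
    rw [image_insert, image_insert, image_erase_of_injOn _ hcc, image_contractClass hinj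
      (fun _ => relab1_child _) h₁ h₂, erase_union_distrib, erase_eq_of_notMem hnot,
      union_insert, union_insert]
    exact hT₂.injOn_image_part hn₂ injOn_relab1

end PPS

namespace PPS.Contracts

variable {S R T₀ : PPS} {x : Leaf} {c₁ c₂ d : Finset Leaf} {f g : Leaf → Leaf}

/-- Read `f` as the relabelling by which a rule embeds its premise `T₀` into its conclusion `R`,
and `g` as its partial inverse: a step into `R` whose new class comes from `T₀` is the image of a
step into `T₀`. -/
theorem canExpand_image (h : S.Contracts R x c₁ c₂) (hS : S.WF) (hT₀ : T₀.WF)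
    (hgf : ∀ y, y.1 ∈ T₀.names → g (f y) = y) (hfg : ∀ y ∈ insert x (c₁ ∪ c₂), f (g y) = y)
    (hchild : ∀ y b, f (child y b) = child (f y) b)
    (hform : ∀ y, y.1 ∈ T₀.names → (R.form (f y).1).subAt (f y).2 = (T₀.form y.1).subAt y.2)
    (hd : d ∈ T₀.part) (hcd : contractClass x c₁ c₂ = d.image f) :
    T₀.CanExpand (g x) (c₁.image g) (c₂.image g) := by
  have hdT₀ : ∀ y ∈ d, y.1 ∈ T₀.names := fun y hy =>
    (mem_leaves.1 (hT₀.isPartitionOf.subset hd hy)).1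
  have hginj : Set.InjOn g (insert x (c₁ ∪ c₂)) :=
    Set.LeftInvOn.injOn (f₁' := f) fun y hy => hfg y (by simpa using hy)
  have hx₀ : f (g x) = x := hfg x (mem_insert_self _ _)
  have hx₀d : g x ∈ d := by
    obtain ⟨y, hy, rfl⟩ := mem_image.1 (hcd ▸ mem_insert_self x _ : x ∈ d.image f)
    rwa [hgf y (hdT₀ y hy)]
  have hgchild : ∀ b, g (child x b) = child (g x) b := fun b => by
    rw [← hgf (child (g x) b) (hdT₀ (g x) hx₀d), hchild, hx₀]
  have himg : ∀ c ⊆ insert x (c₁ ∪ c₂), (c.image g).image f = c := fun c hc =>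
    image_image_of_leftInvOn fun y hy => hfg y (hc hy)
  refine ⟨hT₀.isPartitionOf.subset hd hx₀d, ?_, ?_, hgchild false ▸ mem_image_of_mem g
    h.child_mem_c₁, hgchild true ▸ mem_image_of_mem g h.child_mem_c₂, ?_, fun hne => ?_⟩
  · rw [← hform _ (hdT₀ _ hx₀d), hx₀,
      h.form_eq _ (h.fst_mem_names hS x (mem_insert_self _ _))]
    refine h.linkable.congr ⟨by rintro rfl; rfl, fun e => ?_⟩
    rw [← himg c₁ (by intro y hy; simp [hy]), e, himg c₂ (by intro y hy; simp [hy])]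
  · rwa [← image_contractClass hginj hgchild h.child_mem_c₁ h.child_mem_c₂, hcd,
      image_image_of_leftInvOn fun y hy => hgf y (hdT₀ y hy)]
  · rw [← image_union]
    intro hmem
    obtain ⟨y, hy, hyx⟩ := mem_image.1 hmem
    have : y = x := hginj (Set.mem_insert_of_mem _ (by simpa using hy)) (by simp) hyx
    subst this
    exact hS.not_mem_leaves (h.child_mem false) ((mem_union.1 hy).elim
      (hS.isPartitionOf.subset h.mem_c₁ ·) (hS.isPartitionOf.subset h.mem_c₂ ·))
  · have hdisj := hS.isPartitionOf.2.1 c₁ h.mem_c₁ c₂ h.mem_c₂ (by rintro rfl; exact hne rfl)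
    rw [disjoint_iff_inter_eq_empty, ← image_inter_of_injOn _ _ (hginj.mono (by simp)),
      disjoint_iff_inter_eq_empty.1 hdisj, image_empty]

theorem exists_canExpand (h : S.Contracts R x c₁ c₂) (hS : S.WF) (hT₀ : T₀.WF)
    (hgf : ∀ y, y.1 ∈ T₀.names → g (f y) = y) (hfg : ∀ y, y.1 ∈ S.names → f (g y) = y)
    (hchild : ∀ y b, f (child y b) = child (f y) b)
    (hform : ∀ y, y.1 ∈ T₀.names → (R.form (f y).1).subAt (f y).2 = (T₀.form y.1).subAt y.2)
    (hd : d ∈ T₀.part) (hcd : contractClass x c₁ c₂ = d.image f) :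
    ∃ x₀ d₁ d₂, T₀.CanExpand x₀ d₁ d₂ ∧ Set.InjOn f (insert x₀ (d₁ ∪ d₂)) ∧
      S.Equiv (R.expand (f x₀) (d₁.image f) (d₂.image f)) := by
  have hfg' : ∀ y ∈ insert x (c₁ ∪ c₂), f (g y) = y := fun y hy =>
    hfg y (h.fst_mem_names hS y hy)
  refine ⟨g x, c₁.image g, c₂.image g,
    h.canExpand_image hS hT₀ hgf hfg' hchild hform hd hcd, ?_, ?_⟩
  · have := Set.LeftInvOn.injOn (Set.LeftInvOn.rightInvOn_image (s := ↑(insert x (c₁ ∪ c₂)))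
      fun y hy => hfg' y (by simpa using hy))
    simpa [Set.image_insert_eq, Set.image_union] using this
  · rw [hfg' x (mem_insert_self _ _), image_image_of_leftInvOn fun y hy => hfg' y (by simp [hy]),
      image_image_of_leftInvOn fun y hy => hfg' y (by simp [hy])]
    exact h.equiv_expand hS

end PPS.Contracts

namespace PPS

variable {nB nC n : ℕ} {y : Leaf}

theorem parRule_subAt {T : PPS} (hBC : nB ≠ nC) (hB : nB ∈ T.names) (hn : n ∉ T.names)
    (hy : y.1 ∈ T.names) :
    ((T.parRule nB nC n).form (parRelabel nB nC n y).1).subAt (parRelabel nB nC n y).2 =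
      (T.form y.1).subAt y.2 := by
  have hnB : n ≠ nB := fun h => hn (h ▸ hB)
  have hyn : y.1 ≠ n := fun h => hn (h ▸ hy)
  obtain ⟨m, v⟩ := y
  by_cases hmB : m = nB
  · subst hmB
    simp [parRule, parRelabel, relab1, hBC, MLLForm.subAt]
  by_cases hmC : m = nC
  · subst hmC
    simp [parRule, parRelabel, relab1, hnB, MLLForm.subAt]
  · simp_all [parRule, parRelabel, relab1]

theorem tensRule_subAt_left {T₁ T₂ : PPS} (hn : n ∉ T₁.names) (hy : y.1 ∈ T₁.names) :
    ((tensRule T₁ T₂ nB nC n).form (relab1 nB n false y).1).subAt (relab1 nB n false y).2 =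
      (T₁.form y.1).subAt y.2 := by
  have hyn : y.1 ≠ n := fun h => hn (h ▸ hy)
  obtain ⟨m, v⟩ := y
  by_cases hmB : m = nB
  · subst hmB
    simp [tensRule, relab1, MLLForm.subAt]
  · simp_all [tensRule, relab1]

theorem tensRule_subAt_right {T₁ T₂ : PPS} (hdisj : Disjoint T₁.names T₂.names)
    (hn : n ∉ T₂.names) (hy : y.1 ∈ T₂.names) :
    ((tensRule T₁ T₂ nB nC n).form (relab1 nC n true y).1).subAt (relab1 nC n true y).2 =
      (T₂.form y.1).subAt y.2 := by
  have hyn : y.1 ≠ n := fun h => hn (h ▸ hy)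
  have hy₁ : y.1 ∉ T₁.names := disjoint_right.1 hdisj hy
  obtain ⟨m, v⟩ := y
  by_cases hmC : m = nC
  · subst hmC
    simp [tensRule, relab1, MLLForm.subAt]
  · simp_all [tensRule, relab1]

end PPS

theorem StrictSeqNet.of_contracts_parRule {S T₀ : PPS} {nB nC n : ℕ} (hT₀ : T₀.WF)
    (ih : ∀ {S₀ x c₁ c₂}, S₀.Contracts T₀ x c₁ c₂ → S₀.WF → StrictSeqNet S₀)
    (hB : nB ∈ T₀.names) (hC : nC ∈ T₀.names) (hBC : nB ≠ nC) (hn : n ∉ T₀.names)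
    {x : Leaf} {c₁ c₂ : Finset Leaf} (h : S.Contracts (T₀.parRule nB nC n) x c₁ c₂)
    (hS : S.WF) : StrictSeqNet S := by
  have hnB : n ≠ nB := fun h => hn (h ▸ hB)
  have hnC : n ≠ nC := fun h => hn (h ▸ hC)
  have hfg : ∀ y : Leaf, y.1 ∈ S.names → parRelabel nB nC n (parUnrelabel nB nC n y) = y := by
    intro y hy
    rw [← h.names_eq] at hy
    simp only [parRule, mem_insert, mem_sdiff, mem_insert, mem_singleton, not_or] at hy
    refine parRelabel_parUnrelabel hBC ?_ ?_ <;> rintro rfl <;> simp_all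
  obtain ⟨d, hd, hcd⟩ := mem_image.1 (h.part_eq ▸ mem_insert_self _ _ :
    contractClass x c₁ c₂ ∈ (T₀.parRule nB nC n).part)
  obtain ⟨x₀, d₁, d₂, hexp, hinj, hSe⟩ := h.exists_canExpand hS hT₀
    (fun y hy => parUnrelabel_parRelabel hnB fun h => hn (h ▸ hy)) hfg
    (fun _ _ => parRelabel_child _) (fun _ => parRule_subAt hBC hB hn) hd hcd.symm
  exact .parr _ S nB nC n (ih (hexp.contracts hT₀) (hexp.wf hT₀)) hB hC hBC hn
    (hSe.trans (expand_parRule_equiv hT₀ hB hBC hn (mem_leaves.1 hexp.mem).1 hinj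
      hexp.child_mem_d₁ hexp.child_mem_d₂ hexp.contractClass_mem)) hS

theorem StrictSeqNet.of_contracts_tensRule {S T₁ T₂ : PPS} {nB nC n : ℕ}
    (h₁ : StrictSeqNet T₁) (h₂ : StrictSeqNet T₂)
    (ih₁ : ∀ {S₀ x c₁ c₂}, S₀.Contracts T₁ x c₁ c₂ → S₀.WF → StrictSeqNet S₀)
    (ih₂ : ∀ {S₀ x c₁ c₂}, S₀.Contracts T₂ x c₁ c₂ → S₀.WF → StrictSeqNet S₀)
    (hdisj : Disjoint T₁.names T₂.names) (hB : nB ∈ T₁.names) (hC : nC ∈ T₂.names)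
    (hn : n ∉ T₁.names ∪ T₂.names) {x : Leaf} {c₁ c₂ : Finset Leaf}
    (h : S.Contracts (tensRule T₁ T₂ nB nC n) x c₁ c₂) (hS : S.WF) : StrictSeqNet S := by
  have hn₁ : n ∉ T₁.names := fun h => hn (mem_union_left _ h)
  have hn₂ : n ∉ T₂.names := fun h => hn (mem_union_right _ h)
  have hSnames : ∀ y : Leaf, y.1 ∈ S.names → y.1 ≠ nB ∧ y.1 ≠ nC := by
    intro y hy
    rw [← h.names_eq] at hy
    simp only [tensRule, mem_insert, mem_union, mem_erase] at hy
    constructor <;> rintro rfl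
    · rcases hy with hy | ⟨hne, -⟩ | ⟨-, hy⟩
      exacts [hn₁ (hy ▸ hB), hne rfl, disjoint_left.1 hdisj hB hy]
    · rcases hy with hy | ⟨-, hy⟩ | ⟨hne, -⟩
      exacts [hn₂ (hy ▸ hC), disjoint_left.1 hdisj hy hC, hne rfl]
  have hcc : contractClass x c₁ c₂ ∈ (tensRule T₁ T₂ nB nC n).part :=
    h.part_eq ▸ mem_insert_self _ _
  rcases mem_union.1 hcc with hcc | hcc
  · obtain ⟨d, hd, hcd⟩ := mem_image.1 hcc
    obtain ⟨x₀, d₁, d₂, hexp, hinj, hSe⟩ := h.exists_canExpand hS h₁.wf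
      (fun y hy => unrelab1_relab1 (n := n) fun h => hn₁ (h ▸ hy))
      (fun y hy => relab1_unrelab1 (hSnames y hy).1) (fun _ _ => relab1_child _)
      (fun _ => tensRule_subAt_left hn₁) hd hcd.symm
    exact .tens _ T₂ S nB nC n (ih₁ (hexp.contracts h₁.wf) (hexp.wf h₁.wf)) h₂ hdisj hB hC hn
      (hSe.trans (expand_tensRule_left_equiv h₁.wf h₂.wf hdisj hB hn (mem_leaves.1 hexp.mem).1
        hinj hexp.child_mem_d₁ hexp.child_mem_d₂ hexp.contractClass_mem)) hS
  · obtain ⟨d, hd, hcd⟩ := mem_image.1 hcc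
    obtain ⟨x₀, d₁, d₂, hexp, hinj, hSe⟩ := h.exists_canExpand hS h₂.wf
      (fun y hy => unrelab1_relab1 (n := n) fun h => hn₂ (h ▸ hy))
      (fun y hy => relab1_unrelab1 (hSnames y hy).2) (fun _ _ => relab1_child _)
      (fun _ => tensRule_subAt_right hdisj hn₂) hd hcd.symm
    exact .tens T₁ _ S nB nC n h₁ (ih₂ (hexp.contracts h₂.wf) (hexp.wf h₂.wf)) hdisj hB hC hn
      (hSe.trans (expand_tensRule_right_equiv h₁.wf h₂.wf hdisj hC hn (mem_leaves.1 hexp.mem).1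
        hinj hexp.child_mem_d₁ hexp.child_mem_d₂ hexp.contractClass_mem)) hS

namespace PPS

theorem leaves_parRule {T : PPS} {nB nC n : ℕ} (hBC : nB ≠ nC) (hB : nB ∈ T.names)
    (hC : nC ∈ T.names) (hn : n ∉ T.names) :
    (T.parRule nB nC n).leaves = T.leaves.image (parRelabel nB nC n) := by
  have hnB : n ≠ nB := fun h => hn (h ▸ hB)
  have hnC : n ≠ nC := fun h => hn (h ▸ hC)
  ext ⟨m, w⟩
  simp only [mem_leaves, mem_image, Prod.exists]
  by_cases hm : m = n
  · subst hm
    simp only [parRule, mem_insert, true_or, Function.update_self, mem_union, mem_image, true_and]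
    constructor
    · rintro (⟨v, hv, rfl⟩ | ⟨v, hv, rfl⟩)
      · exact ⟨nB, v, ⟨hB, hv⟩, by simp [parRelabel, relab1, hBC]⟩
      · exact ⟨nC, v, ⟨hC, hv⟩, by simp [parRelabel, relab1, hnB]⟩
    · rintro ⟨m', v, ⟨hm', hv⟩, he⟩
      by_cases hB' : m' = nB
      · subst hB'
        simp only [parRelabel, relab1, hBC, if_false, if_true, Prod.mk.injEq] at he
        exact .inl ⟨v, hv, he.2⟩
      by_cases hC' : m' = nC
      · subst hC'
        simp only [parRelabel, relab1, hnB, if_false, if_true, Prod.mk.injEq] at he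
        exact .inr ⟨v, hv, he.2⟩
      · simp only [parRelabel, relab1, hB', hC', if_false, Prod.mk.injEq] at he
        exact absurd (he.1 ▸ hm') hn
  · simp only [parRule, mem_insert, hm, false_or, mem_sdiff, mem_insert, mem_singleton, not_or,
      ne_eq, not_false_eq_true, Function.update_of_ne]
    constructor
    · rintro ⟨⟨hmT, hmB, hmC⟩, hw⟩
      exact ⟨m, w, ⟨hmT, hw⟩, by simp [parRelabel, relab1, hmB, hmC]⟩
    · rintro ⟨m', v, ⟨hm', hv⟩, he⟩
      by_cases hB' : m' = nB
      · subst hB'; simp_all [parRelabel, relab1]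
      by_cases hC' : m' = nC
      · subst hC'; simp_all [parRelabel, relab1]
      · simp only [parRelabel, relab1, hB', hC', if_false, Prod.mk.injEq] at he
        obtain ⟨rfl, rfl⟩ := he
        exact ⟨⟨hm', hB', hC'⟩, hv⟩

def axiomPPS (N : Finset ℕ) (F : ℕ → MLLForm) : PPS where
  names := N
  form := F
  occs := fun _ => {[]}
  part := {N.image fun m => (m, [])}

theorem leaves_axiomPPS (N : Finset ℕ) (F : ℕ → MLLForm) :
    (axiomPPS N F).leaves = N.image fun m => (m, []) := by
  ext ⟨m, w⟩
  simp [mem_leaves, axiomPPS, and_comm, eq_comm]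

theorem part_axiomPPS (N : Finset ℕ) (F : ℕ → MLLForm) :
    (axiomPPS N F).part = {(axiomPPS N F).leaves} := by
  rw [leaves_axiomPPS]
  rfl

theorem Contracts.of_parsed {S T : PPS} {x : Leaf} {c₁ c₂ : Finset Leaf}
    (h : S.Contracts T x c₁ c₂) (hS : S.WF) (hT : Parsed T) :
    x.2 = [] ∧ S.occs x.1 = {[false], [true]} ∧ (∀ m ∈ S.names, m ≠ x.1 → S.occs m = {[]}) ∧
      S.part = {c₁, c₂} := by
  have hx : x.1 ∈ T.names := h.names_eq ▸ (mem_leaves.1 (h.child_mem false)).1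
  have hx₂ : x.2 = [] := by
    simpa [hT.1 _ hx] using (h.occs_eq ▸ mem_insert_self _ _ : x.2 ∈ T.occs x.1)
  have e := h.equiv_expand hS
  refine ⟨hx₂, ?_, fun m hm hmx =>
    (h.occs_eq_of_ne m hm hmx).symm.trans (hT.1 m (h.names_eq ▸ hm)), ?_⟩
  · rw [e.occs_eq _ (h.names_eq ▸ hx)]
    simp [expand, expandOccs, hT.1 _ hx, hx₂]
  · have hcc : contractClass x c₁ c₂ ∈ T.part := h.part_eq ▸ mem_insert_self _ _
    have hcT : contractClass x c₁ c₂ = T.leaves := mem_singleton.1 (hT.2 ▸ hcc)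
    rw [e.part_eq, expand, hT.2, hcT, erase_singleton]
    rfl

theorem image_relab1_leaves_axiomPPS {S : PPS} {n m₀ : ℕ} {b : Bool} {c : Finset Leaf}
    (hc : c ⊆ S.leaves) (hn : S.occs n = {[false], [true]})
    (hm : ∀ m ∈ S.names, m ≠ n → S.occs m = {[]}) (hb : (n, [b]) ∈ c) (hb' : (n, [!b]) ∉ c)
    (hm₀ : m₀ ∉ S.names) (F : ℕ → MLLForm) :
    (axiomPPS (insert m₀ ((S.names.erase n).filter fun m => (m, []) ∈ c)) F).leaves.image
      (relab1 m₀ n b) = c := by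
  rw [leaves_axiomPPS, image_image]
  ext ⟨m, w⟩
  simp only [mem_image, mem_insert, mem_filter, mem_erase, Function.comp]
  constructor
  · rintro ⟨m', rfl | ⟨⟨-, hm'⟩, hc'⟩, he⟩
    · rwa [← he, relab1_mk_self]
    · rwa [← he, relab1_of_ne (m₀ := m₀) (x := (m', [])) fun h => hm₀ (h ▸ hm')]
  · intro hmw
    obtain ⟨hmS, hw⟩ := mem_leaves.1 (hc hmw)
    by_cases hmn : m = n
    · subst hmn
      have : w = [b] := by
        rw [hn] at hw
        simp only [mem_insert, mem_singleton] at hw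
        rcases hw with rfl | rfl <;> cases b <;> simp_all
      exact ⟨m₀, .inl rfl, by rw [relab1_mk_self, this]⟩
    · have hw : w = [] := by simpa [hm m hmS hmn] using hw
      subst hw
      exact ⟨m, .inr ⟨⟨hmn, hmS⟩, hmw⟩,
        relab1_of_ne (m₀ := m₀) (x := (m, [])) fun h => hm₀ (h ▸ hmS)⟩

theorem equiv_parRule_axiomPPS {S : PPS} (hS : S.WF) {n : ℕ} (hn : n ∈ S.names)
    {a b : MLLForm} (hf : S.form n = .parr a b) (hocc : S.occs n = {[false], [true]})
    (hocc' : ∀ m ∈ S.names, m ≠ n → S.occs m = {[]}) (hpart : ∃ c, S.part = {c}) {nB nC : ℕ}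
    (hnB : nB ∉ S.names) (hnC : nC ∉ S.names) (hBC : nB ≠ nC) :
    S.Equiv ((axiomPPS (insert nB (insert nC (S.names.erase n)))
      (Function.update (Function.update S.form nB a) nC b)).parRule nB nC n) := by
  set A := axiomPPS (insert nB (insert nC (S.names.erase n)))
    (Function.update (Function.update S.form nB a) nC b)
  have hfresh : ∀ m ∈ S.names, m ≠ nB ∧ m ≠ nC := fun m hm =>
    ⟨fun h => hnB (h ▸ hm), fun h => hnC (h ▸ hm)⟩
  have hnames : S.names = (A.parRule nB nC n).names := by
    ext m
    by_cases hm : m = n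
    · subst hm; simp [parRule, hn]
    · have := hfresh m
      simp only [parRule, A, axiomPPS, mem_insert, mem_sdiff, mem_erase, mem_singleton, hm]
      tauto
  have hoccs : ∀ m ∈ S.names, S.occs m = (A.parRule nB nC n).occs m := by
    intro m hm
    by_cases hmn : m = n
    · subst hmn; simp [parRule, A, axiomPPS, hocc]
    · simp [parRule, A, axiomPPS, hmn, hocc' m hm hmn]
  refine ⟨hnames, fun m hm => ?_, hoccs, ?_⟩
  · by_cases hmn : m = n
    · subst hmn; simp [parRule, A, axiomPPS, hf, hBC]
    · simp [parRule, A, axiomPPS, hmn, Function.update_apply, (hfresh m hm).1, (hfresh m hm).2]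
  · obtain ⟨c, hc⟩ := hpart
    have hcS : c = S.leaves := by simpa [hc] using hS.isPartitionOf.2.2
    rw [hc, hcS, leaves_congr hnames hoccs, leaves_parRule hBC (mem_insert_self _ _)
      (mem_insert_of_mem (mem_insert_self _ _)) (by simp [A, axiomPPS, (hfresh n hn).1,
        (hfresh n hn).2])]
    simp only [parRule, A, part_axiomPPS, image_singleton]

theorem equiv_tensRule_axiomPPS {S : PPS} (hS : S.WF) {n : ℕ} (hn : n ∈ S.names)
    {a b : MLLForm} (hf : S.form n = .tens a b) (hocc : S.occs n = {[false], [true]})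
    (hocc' : ∀ m ∈ S.names, m ≠ n → S.occs m = {[]}) {c₁ c₂ : Finset Leaf}
    (hpart : S.part = {c₁, c₂}) (hdisj : Disjoint c₁ c₂) (h₁ : (n, [false]) ∈ c₁)
    (h₂ : (n, [true]) ∈ c₂) {nB nC : ℕ} (hnB : nB ∉ S.names) (hnC : nC ∉ S.names)
    (hBC : nB ≠ nC) :
    S.Equiv (tensRule
      (axiomPPS (insert nB ((S.names.erase n).filter fun m => (m, []) ∈ c₁))
        (Function.update (Function.update S.form nB a) nC b))
      (axiomPPS (insert nC ((S.names.erase n).filter fun m => (m, []) ∈ c₂))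
        (Function.update (Function.update S.form nB a) nC b)) nB nC n) := by
  have hfresh : ∀ m ∈ S.names, m ≠ nB ∧ m ≠ nC := fun m hm =>
    ⟨fun h => hnB (h ▸ hm), fun h => hnC (h ▸ hm)⟩
  have hsub : ∀ c ∈ S.part, c ⊆ S.leaves := fun _ => hS.isPartitionOf.subset
  have hcover : ∀ m ∈ S.names, m ≠ n → (m, []) ∈ c₁ ∨ (m, []) ∈ c₂ := by
    intro m hm hmn
    have : ((m, []) : Leaf) ∈ S.leaves := mem_leaves.2 ⟨hm, by simp [hocc' m hm hmn]⟩
    simpa [← hS.isPartitionOf.2.2, hpart] using this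
  refine ⟨?_, fun m hm => ?_, fun m hm => ?_, ?_⟩
  · ext m
    by_cases hm : m = n
    · subst hm; simp [tensRule, hn]
    · have := hfresh m
      have := hcover m
      simp only [tensRule, axiomPPS, mem_insert, mem_union, mem_erase, mem_filter, hm]
      tauto
  · by_cases hmn : m = n
    · subst hmn; simp [tensRule, axiomPPS, hf, hBC]
    · simp [tensRule, axiomPPS, hmn, Function.update_apply, (hfresh m hm).1, (hfresh m hm).2]
  · by_cases hmn : m = n
    · subst hmn; simp [tensRule, axiomPPS, hocc]
    · simp [tensRule, axiomPPS, hmn, hocc' m hm hmn]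
  · simp only [tensRule, part_axiomPPS, image_singleton]
    rw [image_relab1_leaves_axiomPPS (hsub c₁ (by simp [hpart])) hocc hocc' h₁
        (fun h => disjoint_left.1 hdisj h h₂) hnB,
      image_relab1_leaves_axiomPPS (hsub c₂ (by simp [hpart])) hocc hocc' h₂
        (fun h => disjoint_left.1 hdisj h₁ h) hnC, hpart]
    rfl

end PPS

theorem strictSeqNet_axiomPPS {N : Finset ℕ} (hN : N.Nonempty) (F : ℕ → MLLForm) :
    StrictSeqNet (axiomPPS N F) := by
  refine .ax _ ⟨fun _ _ => rfl, part_axiomPPS N F⟩ (wf_iff.2 ⟨fun m _ => ?_, ?_⟩)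
  · refine ⟨fun u hu => ?_, fun u hu v hv hne => absurd ((mem_singleton.1 hu).trans
      (mem_singleton.1 hv).symm) hne⟩
    rw [mem_singleton.1 hu]
    exact (congrArg Option.isSome (MLLForm.subAt_nil (F m))).trans rfl
  · rw [leaves_axiomPPS]
    exact IsPartitionOf.singleton (hN.image _)

theorem exists_fresh_pair (N : Finset ℕ) : ∃ nB nC, nB ∉ N ∧ nC ∉ N ∧ nB ≠ nC := by
  obtain ⟨nB, hnB⟩ := Infinite.exists_notMem_finset N
  obtain ⟨nC, hnC⟩ := Infinite.exists_notMem_finset (insert nB N)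
  exact ⟨nB, nC, hnB, fun h => hnC (mem_insert_of_mem h), fun e => hnC (e ▸ mem_insert_self _ _)⟩

theorem StrictSeqNet.of_split_axiom_parr {S : PPS} (hS : S.WF) {n : ℕ} (hn : n ∈ S.names)
    {a b : MLLForm} (hf : S.form n = .parr a b) (hocc : S.occs n = {[false], [true]})
    (hocc' : ∀ m ∈ S.names, m ≠ n → S.occs m = {[]}) (hpart : ∃ c, S.part = {c}) :
    StrictSeqNet S := by
  obtain ⟨nB, nC, hnB, hnC, hBC⟩ := exists_fresh_pair S.names
  refine .parr _ S nB nC n (strictSeqNet_axiomPPS ⟨nB, mem_insert_self _ _⟩ _)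
    (mem_insert_self _ _) (mem_insert_of_mem (mem_insert_self _ _)) hBC ?_
    (equiv_parRule_axiomPPS hS hn hf hocc hocc' hpart hnB hnC hBC) hS
  simp only [axiomPPS, mem_insert, mem_erase, not_or]
  exact ⟨fun h => hnB (h ▸ hn), fun h => hnC (h ▸ hn), fun h => h.1 rfl⟩

theorem StrictSeqNet.of_split_axiom_tens {S : PPS} (hS : S.WF) {n : ℕ} (hn : n ∈ S.names)
    {a b : MLLForm} (hf : S.form n = .tens a b) (hocc : S.occs n = {[false], [true]})
    (hocc' : ∀ m ∈ S.names, m ≠ n → S.occs m = {[]}) {c₁ c₂ : Finset Leaf}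
    (hpart : S.part = {c₁, c₂}) (hne : c₁ ≠ c₂) (h₁ : (n, [false]) ∈ c₁)
    (h₂ : (n, [true]) ∈ c₂) : StrictSeqNet S := by
  obtain ⟨nB, nC, hnB, hnC, hBC⟩ := exists_fresh_pair S.names
  have hdisj : Disjoint c₁ c₂ :=
    hS.isPartitionOf.2.1 c₁ (by simp [hpart]) c₂ (by simp [hpart]) hne
  refine .tens _ _ S nB nC n (strictSeqNet_axiomPPS ⟨nB, mem_insert_self _ _⟩ _)
    (strictSeqNet_axiomPPS ⟨nC, mem_insert_self _ _⟩ _) ?_ (mem_insert_self _ _)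
    (mem_insert_self _ _) ?_
    (equiv_tensRule_axiomPPS hS hn hf hocc hocc' hpart hdisj h₁ h₂ hnB hnC hBC) hS
  · simp only [axiomPPS, disjoint_insert_left, disjoint_insert_right, mem_insert, mem_filter,
      mem_erase, hnB, hnC, false_and, and_false, not_false_eq_true, true_and, disjoint_filter,
      or_false, hBC.symm]
    exact fun m _ hm₁ hm₂ => disjoint_left.1 hdisj hm₁ hm₂
  · simp only [axiomPPS, mem_union, mem_insert, mem_filter, mem_erase, not_or]
    exact ⟨⟨fun h => hnB (h ▸ hn), fun h => h.1.1 rfl⟩, ⟨fun h => hnC (h ▸ hn), fun h => h.1.1 rfl⟩⟩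

theorem StrictSeqNet.of_contracts_parsed {S T : PPS} {x : Leaf} {c₁ c₂ : Finset Leaf}
    (hT : Parsed T) (h : S.Contracts T x c₁ c₂) (hS : S.WF) : StrictSeqNet S := by
  obtain ⟨hx₂, hocc, hocc', hpart⟩ := h.of_parsed hS hT
  obtain ⟨n, u⟩ := x
  simp only at hx₂ hocc hocc'
  subst hx₂
  have hn : n ∈ S.names := (mem_leaves.1 (h.child_mem false)).1
  rcases h.linkable with ⟨⟨a, b, hf⟩, rfl⟩ | ⟨⟨a, b, hf⟩, hne⟩ <;>
    rw [MLLForm.subAt_nil, Option.some_inj] at hf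
  · exact .of_split_axiom_parr hS hn hf hocc hocc' ⟨c₁, by simpa using hpart⟩
  · exact .of_split_axiom_tens hS hn hf hocc hocc' hpart hne h.child_mem_c₁ h.child_mem_c₂

theorem StrictSeqNet.of_contracts {T : PPS} (hT : StrictSeqNet T) {S : PPS} {x : Leaf}
    {c₁ c₂ : Finset Leaf} (h : S.Contracts T x c₁ c₂) (hS : S.WF) : StrictSeqNet S := by
  induction hT generalizing S x c₁ c₂ with
  | ax T hP _ => exact of_contracts_parsed hP h hS
  | parr T₀ T nB nC n hT₀ hB hC hBC hn e _ ih =>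
    exact of_contracts_parRule hT₀.wf ih hB hC hBC hn (h.congr_right e) hS
  | tens T₁ T₂ T nB nC n h₁ h₂ hdisj hB hC hn e _ ih₁ ih₂ =>
    exact of_contracts_tensRule h₁ h₂ ih₁ ih₂ hdisj hB hC hn (h.congr_right e) hS

/-- a paraproof structure satisfying the weak parsing criterion is
sequentializable. -/
theorem weak_parsing_implies_sequentializable (S : PPS) (hWF : S.WF)
    (h : ∃ S', Relation.ReflTransGen Parse S S' ∧ Parsed S') : SeqNet S := by
  obtain ⟨S', hchain, hP⟩ := h
  suffices ∀ S₀, Relation.ReflTransGen Parse S₀ S' → S₀.WF → StrictSeqNet S₀ from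
    (this S hchain hWF).toSeqNet
  intro S₀ hchain
  induction hchain using Relation.ReflTransGen.head_induction_on with
  | refl => exact fun hS => .ax _ hP hS
  | head hstep _ ih =>
    intro hS
    obtain ⟨x, c₁, c₂, h⟩ := parse_iff_exists_contracts.1 hstep
    exact (ih (h.wf hS)).of_contracts h hS
end

section
/- In a focused proof search for MALL where every sequent initially has at most one negative formula, this invariant is preserved: if the active formula is positive, each premise contains exactly one negative formula; if the active formula is negative (hence the unique one), each premise consists of positive formulas only. -/
/-! Multiplicative-additive linear logic (MALL). Atoms `atom n` are positive,
their duals `natom n` negative; tensor and plus are positive, par and with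
negative. -/

inductive MALLForm : Type
  | atom : ℕ → MALLForm
  | natom : ℕ → MALLForm
  | tens : MALLForm → MALLForm → MALLForm
  | parr : MALLForm → MALLForm → MALLForm
  | plus : MALLForm → MALLForm → MALLForm
  | withh : MALLForm → MALLForm → MALLForm
  deriving DecidableEq

namespace MALLForm

def dual : MALLForm → MALLForm
  | atom n => natom n
  | natom n => atom n
  | tens a b => parr a.dual b.dual
  | parr a b => tens a.dual b.dual
  | plus a b => withh a.dual b.dual
  | withh a b => plus a.dual b.dual

def isNeg : MALLForm → Bool
  | natom _ => true
  | parr _ _ => true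
  | withh _ _ => true
  | _ => false

def isPos (A : MALLForm) : Bool := !A.isNeg

end MALLForm

/-- Provability in (monolateral, unit-free) MALL sequent calculus. -/
inductive Provable : Multiset MALLForm → Prop
  | ax (n : ℕ) : Provable {MALLForm.atom n, MALLForm.natom n}
  | tens {A B : MALLForm} {Γ Δ : Multiset MALLForm} :
      Provable (A ::ₘ Γ) → Provable (B ::ₘ Δ) →
      Provable (MALLForm.tens A B ::ₘ (Γ + Δ))
  | parr {A B : MALLForm} {Γ : Multiset MALLForm} :
      Provable (A ::ₘ B ::ₘ Γ) → Provable (MALLForm.parr A B ::ₘ Γ)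
  | plusL {A B : MALLForm} {Γ : Multiset MALLForm} :
      Provable (A ::ₘ Γ) → Provable (MALLForm.plus A B ::ₘ Γ)
  | plusR {A B : MALLForm} {Γ : Multiset MALLForm} :
      Provable (B ::ₘ Γ) → Provable (MALLForm.plus A B ::ₘ Γ)
  | withh {A B : MALLForm} {Γ : Multiset MALLForm} :
      Provable (A ::ₘ Γ) → Provable (B ::ₘ Γ) → Provable (MALLForm.withh A B ::ₘ Γ)

/-- One branch of the complete decomposition of the synthetic connective
underlying a positive formula: a choice of a `⊕`-component together with the
splitting of all the `⊗`s, down to the negative subformulas. `PosDecomp P l`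
means that `l` is the list of negative subformulas of one such branch. -/
inductive PosDecomp : MALLForm → List MALLForm → Prop
  | neg {N : MALLForm} (h : N.isNeg = true) : PosDecomp N [N]
  | tens {A B : MALLForm} {l₁ l₂ : List MALLForm} :
      PosDecomp A l₁ → PosDecomp B l₂ → PosDecomp (MALLForm.tens A B) (l₁ ++ l₂)
  | plusL {A B : MALLForm} {l : List MALLForm} :
      PosDecomp A l → PosDecomp (MALLForm.plus A B) l
  | plusR {A B : MALLForm} {l : List MALLForm} :
      PosDecomp B l → PosDecomp (MALLForm.plus A B) l

/-- The complete decomposition of the synthetic connective underlying a negative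
formula: `NegDecomp N L` means that `L` is the list of premises (each a list of
positive subformulas) of the corresponding negative synthetic rule (a `&` of
`⅋`s). -/
inductive NegDecomp : MALLForm → List (List MALLForm) → Prop
  | pos {P : MALLForm} (h : P.isPos = true) : NegDecomp P [[P]]
  | parr {A B : MALLForm} {L₁ L₂ : List (List MALLForm)} :
      NegDecomp A L₁ → NegDecomp B L₂ →
      NegDecomp (MALLForm.parr A B) (L₁.flatMap fun l₁ => L₂.map fun l₂ => l₁ ++ l₂)
  | withh {A B : MALLForm} {L₁ L₂ : List (List MALLForm)} :
      NegDecomp A L₁ → NegDecomp B L₂ → NegDecomp (MALLForm.withh A B) (L₁ ++ L₂)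

namespace MALLForm

theorem isPos_eq_true_iff {A : MALLForm} : A.isPos = true ↔ A.isNeg = false := by
  simp [isPos]

theorem countP_isNeg_eq_zero {Γ : Multiset MALLForm} (h : ∀ A ∈ Γ, A.isPos = true) :
    Γ.countP (fun A => A.isNeg = true) = 0 :=
  Multiset.countP_eq_zero.2 fun A hA => by simp [isPos_eq_true_iff.1 (h A hA)]

end MALLForm

theorem PosDecomp.isNeg_of_mem {P : MALLForm} {l : List MALLForm} (h : PosDecomp P l) :
    ∀ A ∈ l, A.isNeg = true := by
  induction h with
  | neg hN => simpa using hN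
  | tens _ _ ih₁ ih₂ => exact fun A hA => (List.mem_append.1 hA).elim (ih₁ A) (ih₂ A)
  | plusL _ ih => exact ih
  | plusR _ ih => exact ih

theorem NegDecomp.isPos_of_mem {N : MALLForm} {L : List (List MALLForm)} (h : NegDecomp N L) :
    ∀ l ∈ L, ∀ A ∈ l, A.isPos = true := by
  induction h with
  | pos hP => simpa using hP
  | parr _ _ ih₁ ih₂ =>
      simp only [List.mem_flatMap, List.mem_map]
      rintro _ ⟨l₁, hl₁, l₂, hl₂, rfl⟩ A hA
      exact (List.mem_append.1 hA).elim (ih₁ l₁ hl₁ A) (ih₂ l₂ hl₂ A)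
  | withh _ _ ih₁ ih₂ => exact fun l hl => (List.mem_append.1 hl).elim (ih₁ l) (ih₂ l)

theorem PosDecomp.countP_isNeg_premise {P : MALLForm} {l : List MALLForm}
    {Λ : Fin l.length → Multiset MALLForm} (h : PosDecomp P l)
    (hΛ : ∀ A ∈ Finset.univ.sum Λ, A.isPos = true) (i : Fin l.length) :
    Multiset.countP (fun A => A.isNeg = true) (l.get i ::ₘ Λ i) = 1 := by
  have hΛi : ∀ A ∈ Λ i, A.isPos = true := fun A hA =>
    hΛ A (Multiset.mem_sum.2 ⟨i, Finset.mem_univ i, hA⟩)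
  have hli : (l.get i).isNeg = true := h.isNeg_of_mem _ (l.get_mem i)
  rw [Multiset.countP_cons_of_pos (p := fun A : MALLForm => A.isNeg = true) _ hli,
    MALLForm.countP_isNeg_eq_zero hΛi]

theorem NegDecomp.isPos_premise {N : MALLForm} {L : List (List MALLForm)} {Γ : Multiset MALLForm}
    (h : NegDecomp N L) (hΓ : ∀ A ∈ Γ, A.isPos = true) :
    ∀ l ∈ L, ∀ A ∈ ((↑l : Multiset MALLForm) + Γ), A.isPos = true := fun l hl A hA =>
  (Multiset.mem_add.1 hA).elim (fun hAl => h.isPos_of_mem l hl A (by simpa using hAl)) (hΓ A)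

/-- in a focused proof search for MALL, the invariant "at most one
negative formula per sequent" is preserved: if the active formula is positive
(so that, by the focusing discipline, all the other formulas of the sequent are
positive), each premise of its synthetic rule contains exactly one negative
formula; if the active formula is negative (hence the unique negative one),
each premise of its synthetic rule consists of positive formulas only. -/
theorem focusing_invariant :
    (∀ (P : MALLForm) (l : List MALLForm) (Λ : Fin l.length → Multiset MALLForm)
        (Γ : Multiset MALLForm),
        P.isPos = true → (∀ A ∈ Γ, A.isPos = true) → PosDecomp P l →
        Γ = Finset.univ.sum Λ →
        ∀ i : Fin l.length,
          Multiset.countP (fun A => A.isNeg = true) (l.get i ::ₘ Λ i) = 1) ∧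
    (∀ (N : MALLForm) (L : List (List MALLForm)) (Γ : Multiset MALLForm),
        N.isNeg = true → (∀ A ∈ Γ, A.isPos = true) → NegDecomp N L →
        ∀ l ∈ L, ∀ A ∈ ((↑l : Multiset MALLForm) + Γ), A.isPos = true) := by
  exact ⟨fun _ _ _ _ _ hΓ h hsum => h.countP_isNeg_premise (hsum ▸ hΓ),
    fun _ _ _ _ hΓ h => h.isPos_premise hΓ⟩
end

section
/- The focalization property holds for MALL proof search: every provable sequent consisting only of positive formulas has a proof that begins (reading from the root) with a complete decomposition of the synthetic connective of at least one of its formulas. -/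
/-- `Focus P Γ` : the sequent `⊢ P, Γ` has a proof beginning (from the root)
with a complete decomposition of the synthetic connective underlying `P`:
tensor and plus rules are applied to `P` and its positive subformulas until all
exposed subformulas are negative (which are then released), or a positive atom
is reached (which must be closed by an axiom). -/
inductive Focus : MALLForm → Multiset MALLForm → Prop
  | release {N : MALLForm} {Γ : Multiset MALLForm} (h : N.isNeg = true) :
      Provable (N ::ₘ Γ) → Focus N Γ
  | atom (n : ℕ) : Focus (MALLForm.atom n) {MALLForm.natom n}
  | tens {A B : MALLForm} {Γ₁ Γ₂ : Multiset MALLForm} :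
      Focus A Γ₁ → Focus B Γ₂ → Focus (MALLForm.tens A B) (Γ₁ + Γ₂)
  | plusL {A B : MALLForm} {Γ : Multiset MALLForm} :
      Focus A Γ → Focus (MALLForm.plus A B) Γ
  | plusR {A B : MALLForm} {Γ : Multiset MALLForm} :
      Focus B Γ → Focus (MALLForm.plus A B) Γ

/-! Induct on the proof. Its last rule is a tensor or plus rule introducing `C` from an
active formula `A`. If the premise containing `A` has a proof focused on `A` (or `A` is
negative and can be released), the focus extends to `C`. Otherwise that premise is focused
on some other formula `Q`, with the positive formula `A` in the context. A positive context
formula is never touched by the decomposition of `Q`, so it ends up in a release leaf, and the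
rule introducing `C` permutes up into that leaf: the same decomposition of `Q` then works
for the conclusion. -/

lemma MALLForm.isPos_of_isNeg_eq_false {A : MALLForm} (h : A.isNeg = false) : A.isPos = true := by
  simp [MALLForm.isPos, h]

def Focusable (Γ : Multiset MALLForm) : Prop :=
  ∃ P ∈ Γ, Focus P (Γ.erase P)

lemma Focus.focusable_cons {P : MALLForm} {Γ : Multiset MALLForm} (h : Focus P Γ) :
    Focusable (P ::ₘ Γ) :=
  ⟨P, Multiset.mem_cons_self _ _, by rwa [Multiset.erase_cons_head]⟩

theorem Focus.replace {A : MALLForm} {E : Multiset MALLForm} (hA : A.isPos = true)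
    (hE : ∀ Θ, Provable (A ::ₘ Θ) → Provable (E + Θ)) {Q : MALLForm} {Δ : Multiset MALLForm}
    (hQ : Focus Q Δ) (hAΔ : A ∈ Δ) : Focus Q (E + Δ.erase A) := by
  induction hQ with
  | release hN p =>
    rw [← Multiset.cons_erase hAΔ, Multiset.cons_swap] at p
    exact .release hN (by simpa only [Multiset.add_cons] using hE _ p)
  | atom n =>
    rw [Multiset.mem_singleton] at hAΔ
    subst hAΔ
    simp [MALLForm.isPos, MALLForm.isNeg] at hA
  | @tens _ _ Γ₁ Γ₂ _ _ ih₁ ih₂ =>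
    rcases Multiset.mem_add.mp hAΔ with h₁ | h₂
    · rw [Multiset.erase_add_left_pos _ h₁, ← add_assoc]
      exact .tens (ih₁ h₁) ‹_›
    · rw [Multiset.erase_add_right_pos _ h₂, add_left_comm]
      exact .tens ‹_› (ih₂ h₂)
  | plusL _ ih => exact .plusL (ih hAΔ)
  | plusR _ ih => exact .plusR (ih hAΔ)

theorem Focus.replace_cons {A : MALLForm} {E Δ : Multiset MALLForm} (hA : A.isPos = true)
    (hE : ∀ Θ, Provable (A ::ₘ Θ) → Provable (E + Θ)) {Q : MALLForm}
    (hQ : Focus Q (A ::ₘ Δ)) : Focus Q (E + Δ) := by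
  simpa using hQ.replace hA hE (Multiset.mem_cons_self _ _)

theorem focusable_add_of_premise {A : MALLForm} {Γ E : Multiset MALLForm}
    (hA : Provable (A ::ₘ Γ)) (ih : A.isPos = true → Focusable (A ::ₘ Γ))
    (rule : ∀ Θ, Provable (A ::ₘ Θ) → Provable (E + Θ))
    (lift : Focus A Γ → Focusable (E + Γ)) : Focusable (E + Γ) := by
  cases hN : A.isNeg
  case true => exact lift (.release hN hA)
  case false =>
    have hApos := MALLForm.isPos_of_isNeg_eq_false hN
    obtain ⟨Q, hQ, hF⟩ := ih hApos
    by_cases hQA : Q = A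
    · subst hQA
      exact lift (by rwa [Multiset.erase_cons_head] at hF)
    · have hQΓ : Q ∈ Γ := (Multiset.mem_cons.mp hQ).resolve_left hQA
      rw [Multiset.erase_cons_tail _ (Ne.symm hQA)] at hF
      refine ⟨Q, Multiset.mem_add.mpr (.inr hQΓ), ?_⟩
      rw [Multiset.erase_add_right_pos _ hQΓ]
      exact hF.replace_cons hApos rule

theorem focusable_cons_of_premise {A C : MALLForm} {Γ : Multiset MALLForm}
    (hA : Provable (A ::ₘ Γ)) (ih : A.isPos = true → Focusable (A ::ₘ Γ))
    (rule : ∀ Θ, Provable (A ::ₘ Θ) → Provable (C ::ₘ Θ))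
    (lift : Focus A Γ → Focus C Γ) : Focusable (C ::ₘ Γ) := by
  simp only [← Multiset.singleton_add] at rule ⊢
  exact focusable_add_of_premise hA ih rule fun hF => by
    simpa only [Multiset.singleton_add] using (lift hF).focusable_cons

theorem Provable.focusable {Γ : Multiset MALLForm} (h : Provable Γ)
    (hpos : ∀ A ∈ Γ, A.isPos = true) : Focusable Γ := by
  induction h with
  | ax n => simp [MALLForm.isPos, MALLForm.isNeg] at hpos
  | parr => simp [MALLForm.isPos, MALLForm.isNeg] at hpos
  | withh => simp [MALLForm.isPos, MALLForm.isNeg] at hpos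
  | @plusL A B Γ hA ih =>
    have hΓ := (Multiset.forall_mem_cons.mp hpos).2
    exact focusable_cons_of_premise hA (fun hApos => ih (Multiset.forall_mem_cons.mpr ⟨hApos, hΓ⟩))
      (fun _ => .plusL) .plusL
  | @plusR A B Γ hB ih =>
    have hΓ := (Multiset.forall_mem_cons.mp hpos).2
    exact focusable_cons_of_premise hB (fun hBpos => ih (Multiset.forall_mem_cons.mpr ⟨hBpos, hΓ⟩))
      (fun _ => .plusR) .plusR
  | @tens A B Γ Δ hA hB ihA ihB =>
    have hΓ : ∀ X ∈ Γ, X.isPos = true := fun X hX => hpos X (by simp [hX])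
    have hΔ : ∀ X ∈ Δ, X.isPos = true := fun X hX => hpos X (by simp [hX])
    rw [add_comm, ← Multiset.cons_add]
    refine focusable_add_of_premise hA (fun hApos => ihA (Multiset.forall_mem_cons.mpr ⟨hApos, hΓ⟩))
      (fun _ p => ?_) (fun hFA => ?_)
    · rw [Multiset.cons_add, add_comm]
      exact p.tens hB
    · rw [Multiset.cons_add, add_comm, ← Multiset.cons_add]
      refine focusable_add_of_premise hB (fun hBpos => ihB (Multiset.forall_mem_cons.mpr ⟨hBpos, hΔ⟩))
        (fun _ p => ?_) (fun hFB => ?_)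
      · rw [Multiset.cons_add]
        exact hA.tens p
      · rw [Multiset.cons_add]
        exact (hFA.tens hFB).focusable_cons

/-- focalization. Every provable MALL sequent consisting only of
positive formulas has a proof that begins (from the root) with a complete
decomposition of the synthetic connective of at least one of its formulas. -/
theorem focalization (Γ : Multiset MALLForm) (h : Provable Γ)
    (hpos : ∀ A ∈ Γ, A.isPos = true) :
    ∃ P ∈ Γ, Focus P (Γ.erase P) :=
  h.focusable hpos
end
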